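/- arXiv:1712.04340 — 14 statements merged into one kernel-verified Lean document; each statement's English description precedes it below -/
import Mathlib

section
/- Let R be a finite ring (not necessarily commutative and not necessarily with a multiplicative identity). Then the following are equivalent: (i) for all r, s ∈ R with r ≠ 0 and s ≠ 0, there exist n ≥ 1 and coefficients a₁, …, aₙ ∈ R such that a₁r + a₂r² + … + aₙrⁿ = s; (ii) R is a finite field, i.e., there exists e ∈ R which is a two-sided multiplicative identity, multiplication on R is commutative, and every nonzero element of R has a multiplicative inverse. -/
/-!
Write `Rr` for the left multiples of `r`. A polynomial in `r` without constant term lies in `Rr`,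
so the hypothesis says `Rr = R` for every `r ≠ 0`. Then `R` has no nonzero `x` with `x² = 0`
(from `x = bx` and `b = cx` we get `x = cx² = 0`). By finiteness some power `f` of a nonzero
element is idempotent, and it is nonzero since `R` is reduced. Writing `s = bf` shows that `f` is a
right identity, and `t = fs - s` satisfies `t² = 0`, so `f` is a two-sided identity. Now `Rx = R`
gives every nonzero `x` a left inverse, so `R` is a finite domain, hence a field by Wedderburn.
-/

open Finset

/-- `nupow r k` is `r^(k+1)` in a non-unital ring: the (k+1)-fold product of `r`. -/
def nupow {R : Type*} [NonUnitalRing R] (r : R) : ℕ → R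
  | 0 => r
  | k + 1 => nupow r k * r

theorem exists_pow_isIdempotentElem {M : Type*} [Monoid M] [Finite M] (x : M) :
    ∃ n, n ≠ 0 ∧ IsIdempotentElem (x ^ n) := by
  obtain ⟨i, j, hne, hij⟩ := Finite.exists_ne_map_eq_of_infinite (x ^ · : ℕ → M)
  wlog hlt : i < j generalizing i j
  · exact this j i hne.symm hij.symm (by omega)
  set d := j - i
  have hperiod : ∀ m, i ≤ m → x ^ (m + d) = x ^ m := fun m hm => by
    calc x ^ (m + d) = x ^ (m - i) * x ^ j := by rw [← pow_add]; congr 1; omega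
      _ = x ^ m := by rw [← hij, ← pow_add]; congr 1; omega
  have hmultiple : ∀ k m, i ≤ m → x ^ (m + k * d) = x ^ m := fun k m hm => by
    induction k with
    | zero => simp
    | succ k ih => rw [Nat.succ_mul, ← add_assoc, hperiod _ (hm.trans (Nat.le_add_right _ _)), ih]
  have hn : i < (i + 1) * d := by nlinarith [show 1 ≤ d by omega]
  refine ⟨(i + 1) * d, by omega, ?_⟩
  rw [IsIdempotentElem, ← pow_add, hmultiple _ _ hn.le]

section Nupow

variable {R : Type*} [NonUnitalRing R]

theorem coe_nupow (r : R) (k : ℕ) : ((nupow r k : R) : WithOne R) = (r : WithOne R) ^ (k + 1) := by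
  induction k with
  | zero => simp [nupow]
  | succ k ih => rw [nupow, WithOne.coe_mul, ih, ← pow_succ]

theorem nupow_mul_nupow (r : R) (i j : ℕ) : nupow r i * nupow r j = nupow r (i + j + 1) :=
  WithOne.coe_injective <| by
    rw [WithOne.coe_mul, coe_nupow, coe_nupow, coe_nupow, ← pow_add]; ring_nf

theorem nupow_eq_zero_of_le (r : R) {i j : ℕ} (hij : i ≤ j) (h : nupow r i = 0) :
    nupow r j = 0 := by
  obtain rfl | hlt := hij.eq_or_lt
  · exact h
  · rw [show j = i + (j - i - 1) + 1 by omega, ← nupow_mul_nupow, h, zero_mul]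

theorem nupow_ne_zero (hred : ∀ x : R, x * x = 0 → x = 0) {r : R} (hr : r ≠ 0) (k : ℕ) :
    nupow r k ≠ 0 := by
  induction k with
  | zero => exact hr
  | succ k ih =>
    refine fun h => ih (hred _ ?_)
    rw [nupow_mul_nupow]
    exact nupow_eq_zero_of_le r (by omega) h

theorem exists_isIdempotentElem_nupow [Finite R] (r : R) : ∃ k, IsIdempotentElem (nupow r k) := by
  have : Finite (WithOne R) := inferInstanceAs (Finite (Option R))
  obtain ⟨n, hn, hidem⟩ := exists_pow_isIdempotentElem (r : WithOne R)
  obtain ⟨k, rfl⟩ := Nat.exists_eq_succ_of_ne_zero hn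
  exact ⟨k, WithOne.coe_injective <| by rw [WithOne.coe_mul, coe_nupow]; exact hidem⟩

theorem exists_mul_eq_sum_mul_nupow (r : R) (a : ℕ → R) (n : ℕ) :
    ∃ b, b * r = ∑ i ∈ range n, a (i + 1) * nupow r i := by
  have hterm : ∀ i, a (i + 1) * nupow r i ∈ (AddMonoidHom.mulRight r).range := by
    rintro (_ | k)
    · exact ⟨a 1, rfl⟩
    · exact ⟨a (k + 2) * nupow r k, mul_assoc _ _ _⟩
  exact sum_mem fun i _ => hterm i

end Nupow

section LeftMultiples

variable {R : Type*} [NonUnitalRing R]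

theorem eq_zero_of_mul_self_eq_zero_of_forall_exists_mul_eq
    (h : ∀ r s : R, r ≠ 0 → s ≠ 0 → ∃ b, b * r = s) {x : R} (hx : x * x = 0) : x = 0 := by
  by_contra hx0
  obtain ⟨b, hb⟩ := h x x hx0 hx0
  have hb0 : b ≠ 0 := by
    rintro rfl
    exact hx0 (by rw [← hb, zero_mul])
  obtain ⟨c, hc⟩ := h x b hx0 hb0
  exact hx0 (by rw [← hb, ← hc, mul_assoc, hx, mul_zero])

theorem mul_eq_self_of_isIdempotentElem_of_forall_exists_mul_eq
    (h : ∀ r s : R, r ≠ 0 → s ≠ 0 → ∃ b, b * r = s) {f : R} (hf0 : f ≠ 0)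
    (hf : IsIdempotentElem f) (s : R) : s * f = s := by
  rcases eq_or_ne s 0 with rfl | hs
  · exact zero_mul f
  obtain ⟨b, rfl⟩ := h f s hf0 hs
  rw [mul_assoc, hf.eq]

theorem mul_eq_self_of_forall_mul_eq_self (hred : ∀ x : R, x * x = 0 → x = 0) {e : R}
    (he : ∀ x, x * e = x) (x : R) : e * x = x := by
  have hte : (e * x - x) * e = e * x - x := he _
  have hsq : (e * x - x) * (e * x - x) = 0 := by
    rw [mul_sub (e * x - x), ← mul_assoc, hte, sub_self]
  exact sub_eq_zero.mp (hred _ hsq)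

theorem exists_identity_of_forall_exists_mul_eq [Finite R] [Nontrivial R]
    (h : ∀ r s : R, r ≠ 0 → s ≠ 0 → ∃ b, b * r = s) :
    ∃ e : R, (∀ x, e * x = x ∧ x * e = x) ∧ ∀ x, x ≠ 0 → ∃ y, y * x = e := by
  have hred (x : R) : x * x = 0 → x = 0 := eq_zero_of_mul_self_eq_zero_of_forall_exists_mul_eq h
  obtain ⟨r, hr⟩ := exists_ne (0 : R)
  obtain ⟨k, hk⟩ := exists_isIdempotentElem_nupow r
  have he0 : nupow r k ≠ 0 := nupow_ne_zero hred hr k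
  have hright := mul_eq_self_of_isIdempotentElem_of_forall_exists_mul_eq h he0 hk
  exact ⟨nupow r k, fun x => ⟨mul_eq_self_of_forall_mul_eq_self hred hright x, hright x⟩,
    fun x hx => h x _ hx he0⟩

end LeftMultiples

theorem isField_of_forall_exists_mul_eq_one {R : Type*} [Ring R] [Finite R] [Nontrivial R]
    (h : ∀ x : R, x ≠ 0 → ∃ y, y * x = 1) : IsField R := by
  have : NoZeroDivisors R := ⟨fun {x y} hxy => or_iff_not_imp_left.mpr fun hx => by
    obtain ⟨x', hx'⟩ := h x hx
    rw [← one_mul y, ← hx', mul_assoc, hxy, mul_zero]⟩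
  have := NoZeroDivisors.to_isDomain R
  exact Finite.isDomain_to_isField R

theorem mul_comm_and_exists_mul_eq_of_identity {R : Type*} [NonUnitalRing R] [Finite R]
    [Nontrivial R] {e : R} (he : ∀ x, e * x = x ∧ x * e = x)
    (hinv : ∀ x, x ≠ 0 → ∃ y, y * x = e) :
    (∀ x y : R, x * y = y * x) ∧ ∀ x, x ≠ 0 → ∃ y, x * y = e := by
  let _ : Ring R :=
    { ‹NonUnitalRing R› with
      one := e
      one_mul := fun x => (he x).1
      mul_one := fun x => (he x).2 }
  have hfield := isField_of_forall_exists_mul_eq_one hinv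
  exact ⟨hfield.mul_comm, fun x hx => hfield.mul_inv_cancel hx⟩

/-- **Lemma 1.1.** A finite nonzero (not necessarily commutative or unital) ring `R` satisfies:
for all nonzero `r, s` there is a polynomial with zero constant term and coefficients in `R`
sending `r` to `s`, if and only if `R` is a finite field. -/
theorem stmt_0 {R : Type*} [NonUnitalRing R] [Finite R] [Nontrivial R] :
    (∀ r s : R, r ≠ 0 → s ≠ 0 →
      ∃ n : ℕ, 1 ≤ n ∧ ∃ a : ℕ → R,
        (∑ i ∈ Finset.range n, a (i + 1) * nupow r i) = s) ↔
    (∃ e : R, (∀ x : R, e * x = x ∧ x * e = x) ∧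
      (∀ x y : R, x * y = y * x) ∧
      (∀ x : R, x ≠ 0 → ∃ y : R, x * y = e)) := by
  constructor
  · intro h
    have hmul : ∀ r s : R, r ≠ 0 → s ≠ 0 → ∃ b, b * r = s := fun r s hr hs => by
      obtain ⟨n, -, a, ha⟩ := h r s hr hs
      obtain ⟨b, hb⟩ := exists_mul_eq_sum_mul_nupow r a n
      exact ⟨b, hb.trans ha⟩
    obtain ⟨e, he, hinv⟩ := exists_identity_of_forall_exists_mul_eq hmul
    exact ⟨e, he, mul_comm_and_exists_mul_eq_of_identity he hinv⟩
  · rintro ⟨e, he, hcomm, hinv⟩ r s hr -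
    obtain ⟨y, hy⟩ := hinv r hr
    refine ⟨1, le_rfl, fun _ => s * y, ?_⟩
    rw [sum_range_one, nupow, mul_assoc, hcomm y r, hy, (he s).2]
end

section
/- Let R be a nonzero ring (not necessarily commutative and not necessarily with a multiplicative identity). Then the following are equivalent: (i) R is a finite field (there exists a two-sided multiplicative identity, multiplication is commutative, every nonzero element is invertible, and R is finite); (ii) every function g : R → R can be given by a polynomial with coefficients in R, i.e., there exist n ≥ 0 and a₀, a₁, …, aₙ ∈ R such that g(r) = a₀ + a₁r + … + aₙrⁿ for all r ∈ R; (iii) every bijection g : R → R can be given by a polynomial with coefficients in R in the same sense. -/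
/-- A function `g : R → R` is given by a polynomial with coefficients in `R`:
`g r = a₀ + a₁ r + a₂ r² + ⋯ + aₙ rⁿ` for all `r`. -/
def IsPolyFun {R : Type*} [NonUnitalRing R] (g : R → R) : Prop :=
  ∃ n : ℕ, ∃ a : ℕ → R, ∀ r : R,
    g r = a 0 + ∑ i ∈ Finset.range n, a (i + 1) * nupow r i

/-!
If every bijection of `R` is polynomial, then `R` is finite, since an infinite `R` has only
`#R` polynomial functions but `2 ^ #R` permutations. Moreover, `g r - g 0` is a left multiple of
`r` for every polynomial `g`, so choosing for `g` the transposition of `r` and `x` shows that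
every `x` is a left multiple of every `r ≠ 0`. By finiteness, right multiplication by `r ≠ 0` is
then bijective; this yields a two-sided identity and excludes zero divisors, so `R` is a finite
domain, hence a field by Wedderburn's little theorem. Conversely, every function on a finite
field is a Lagrange interpolation polynomial.
-/

open Cardinal Polynomial Function

def IsFiniteField (R : Type*) [NonUnitalRing R] : Prop :=
  Finite R ∧ ∃ e : R, (∀ x : R, e * x = x ∧ x * e = x) ∧
    (∀ x y : R, x * y = y * x) ∧ (∀ x : R, x ≠ 0 → ∃ y : R, x * y = e)

section NonUnitalRing

variable {R : Type*} [NonUnitalRing R]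

abbrev ringOfIdentity (e : R) (he : ∀ x : R, e * x = x ∧ x * e = x) : Ring R :=
  { ‹NonUnitalRing R› with one := e, one_mul := fun x => (he x).1, mul_one := fun x => (he x).2 }

@[simp]
lemma zero_nupow (i : ℕ) : nupow (0 : R) i = 0 := by
  induction i with
  | zero => rfl
  | succ k ih => simp [nupow, ih]

lemma IsPolyFun.exists_eq_add_mul {f : R → R} (hf : IsPolyFun f) (r : R) :
    ∃ c : R, f r = f 0 + c * r := by
  obtain ⟨n, a, ha⟩ := hf
  have hmem : ∀ i, a (i + 1) * nupow r i ∈ AddMonoidHom.mrange (AddMonoidHom.mulRight r) := by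
    rintro (_ | k)
    · exact ⟨a 1, rfl⟩
    · exact ⟨a (k + 2) * nupow r k, mul_assoc _ _ _⟩
  obtain ⟨c, hc⟩ := sum_mem fun i (_ : i ∈ Finset.range n) => hmem i
  exact ⟨c, by simp [ha, ← hc]⟩

lemma setOf_isPolyFun_subset_range :
    {g : R → R | IsPolyFun g} ⊆
      Set.range fun (p : R × Σ n, (Fin n → R)) r => p.1 + ∑ i, p.2.2 i * nupow r i := by
  rintro g ⟨n, a, ha⟩
  exact ⟨(a 0, ⟨n, fun i => a (i + 1)⟩), funext fun r => by
    simp [ha, Fin.sum_univ_eq_sum_range (fun i => a (i + 1) * nupow r i)]⟩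

lemma mk_setOf_isPolyFun_le [Infinite R] : #{g : R → R | IsPolyFun g} ≤ #R :=
  calc #{g : R → R | IsPolyFun g}
      _ ≤ #(R × Σ n, (Fin n → R)) := (mk_le_mk_of_subset setOf_isPolyFun_subset_range).trans
          mk_range_le
      _ = #R := by
        rw [mk_prod, lift_id, ← List.equivSigmaTuple.cardinal_eq, mk_list_eq_mk, lift_id,
          mul_eq_self (aleph0_le_mk R)]

lemma finite_of_forall_bijective_isPolyFun
    (h : ∀ g : R → R, Bijective g → IsPolyFun g) : Finite R := by
  by_contra hinf
  rw [not_finite_iff_infinite] at hinf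
  have hperm : #(Equiv.Perm R) ≤ #{g : R → R | IsPolyFun g} :=
    mk_le_of_injective (f := fun σ => ⟨σ, h σ σ.bijective⟩)
      fun σ τ hστ => Equiv.coe_fn_injective (congrArg Subtype.val hστ)
  rw [mk_perm_eq_two_power] at hperm
  exact (cantor #R).not_ge (hperm.trans mk_setOf_isPolyFun_le)

lemma mulRight_surjective_of_forall_bijective_isPolyFun
    (h : ∀ g : R → R, Bijective g → IsPolyFun g) {r : R} (hr : r ≠ 0) :
    Surjective (· * r) := by
  classical
  intro x
  rcases eq_or_ne x 0 with rfl | hx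
  · exact ⟨0, zero_mul r⟩
  obtain ⟨c, hc⟩ := (h (Equiv.swap r x) (Equiv.swap r x).bijective).exists_eq_add_mul r
  rw [Equiv.swap_apply_left, Equiv.swap_apply_of_ne_of_ne hr.symm hx.symm, zero_add] at hc
  exact ⟨c, hc.symm⟩

lemma noZeroDivisors_of_mulRight_injective (hinj : ∀ r : R, r ≠ 0 → Injective (· * r)) :
    NoZeroDivisors R :=
  ⟨fun {a b} hab => or_iff_not_imp_right.2 fun hb =>
    hinj b hb (show a * b = 0 * b by rw [hab, zero_mul])⟩

lemma mul_eq_self_and_eq_self_of_mul_eq_self (hinj : ∀ r : R, r ≠ 0 → Injective (· * r))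
    {e r : R} (hr : r ≠ 0) (he : e * r = r) (x : R) : e * x = x ∧ x * e = x := by
  have he0 : e ≠ 0 := by
    rintro rfl
    exact hr (by rw [← he, zero_mul])
  have hee : e * e = e := hinj r hr (by simp only [mul_assoc, he])
  have hright : ∀ y : R, y * e = y := fun y => hinj e he0 (by simp only [mul_assoc, hee])
  refine ⟨by_contra fun hne => ?_, hright x⟩
  have hd : e * x - x ≠ 0 := sub_ne_zero.2 hne
  refine hd (hinj _ hd ?_)
  calc (e * x - x) * (e * x - x) = (e * x - x) * e * x - (e * x - x) * x := by
        rw [mul_sub, mul_assoc]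
    _ = 0 * (e * x - x) := by rw [hright, sub_self, zero_mul]

lemma isFiniteField_of_forall_bijective_isPolyFun [Nontrivial R]
    (h : ∀ g : R → R, Bijective g → IsPolyFun g) : IsFiniteField R := by
  have hfin := finite_of_forall_bijective_isPolyFun h
  have hsurj := fun r (hr : r ≠ 0) => mulRight_surjective_of_forall_bijective_isPolyFun h hr
  have hinj := fun r (hr : r ≠ 0) => Finite.injective_iff_surjective.2 (hsurj r hr)
  obtain ⟨r, hr⟩ := exists_ne (0 : R)
  obtain ⟨e, he⟩ := hsurj r hr r
  have hid := mul_eq_self_and_eq_self_of_mul_eq_self hinj hr he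
  let := ringOfIdentity e hid
  have := noZeroDivisors_of_mulRight_injective hinj
  have : IsDomain R := NoZeroDivisors.to_isDomain R
  have hfield := Finite.isDomain_to_isField R
  exact ⟨hfin, e, hid, hfield.mul_comm, fun x hx => hfield.mul_inv_cancel hx⟩

end NonUnitalRing

lemma nupow_eq_pow {R : Type*} [Ring R] (r : R) (i : ℕ) : nupow r i = r ^ (i + 1) := by
  induction i with
  | zero => exact (pow_one r).symm
  | succ k ih => rw [nupow, ih, pow_succ _ (k + 1)]

lemma isPolyFun_eval {R : Type*} [Ring R] (p : R[X]) : IsPolyFun p.eval :=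
  ⟨p.natDegree, p.coeff, fun r => by
    beta_reduce
    rw [eval_eq_sum_range, Finset.sum_range_succ', pow_zero, mul_one, add_comm]
    simp only [nupow_eq_pow]⟩

lemma isPolyFun_of_finite {F : Type*} [Field F] [Finite F] (g : F → F) : IsPolyFun g := by
  classical
  have := Fintype.ofFinite F
  have hg : g = (Lagrange.interpolate Finset.univ id g).eval := funext fun r =>
    (Lagrange.eval_interpolate_at_node g (Set.injOn_id _) (Finset.mem_univ r)).symm
  rw [hg]
  exact isPolyFun_eval _

lemma IsFiniteField.isPolyFun {R : Type*} [NonUnitalRing R] [Nontrivial R]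
    (h : IsFiniteField R) (g : R → R) : IsPolyFun g := by
  obtain ⟨hfin, e, hid, hcomm, hinv⟩ := h
  let := ringOfIdentity e hid
  let : Field R := IsField.toField ⟨exists_pair_ne R, hcomm, hinv _⟩
  exact isPolyFun_of_finite g

/-- **Proposition 1.2.** For a nonzero (not necessarily commutative or unital) ring `R`,
the following are equivalent: (i) `R` is a finite field; (ii) every function on `R` is given
by a polynomial with coefficients in `R`; (iii) every bijection on `R` is given by a
polynomial with coefficients in `R`. -/
theorem stmt_1 {R : Type*} [NonUnitalRing R] [Nontrivial R] :
    List.TFAE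
      [ (Finite R ∧ ∃ e : R, (∀ x : R, e * x = x ∧ x * e = x) ∧
          (∀ x y : R, x * y = y * x) ∧ (∀ x : R, x ≠ 0 → ∃ y : R, x * y = e)),
        (∀ g : R → R, IsPolyFun g),
        (∀ g : R → R, Function.Bijective g → IsPolyFun g) ] := by
  tfae_have 1 → 2 := IsFiniteField.isPolyFun
  tfae_have 2 → 3 := fun h g _ => h g
  tfae_have 3 → 1 := isFiniteField_of_forall_bijective_isPolyFun
  tfae_finish
end

section
/- Let R be a nonzero (not necessarily commutative) ring with identity such that for every subset S ⊆ R there exists a polynomial f ∈ R[X] with f(r) = 1 when r ∈ S and f(r) = 0 when r ∉ S (for all r ∈ R). Then R is a finite field, i.e., R is finite, multiplication on R is commutative, and every nonzero element of R is a unit. -/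
/-!
Sending each subset to a polynomial realizing its indicator function is injective, so
`2 ^ #R ≤ #R[X]`; since `#R[X] = #R` for infinite `R`, Cantor's theorem forces `R` to be finite.
For `r ≠ 0`, a polynomial `f` with `f(0) = 1` and `f(r) = 0` has the form `f = g X + 1`, so
`g(r) r = -1` and `r` has a left inverse. Thus `R` has no zero divisors, and a finite domain is a
field by Wedderburn's little theorem.
-/

open Polynomial

theorem Polynomial.finite_of_injective_set {R : Type*} [Semiring R] {F : Set R → R[X]}
    (hF : Function.Injective F) : Finite R := by
  by_contra hinf
  have : Infinite R := not_finite_iff_infinite.mp hinf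
  have hle : Cardinal.mk (Set R) ≤ Cardinal.mk R :=
    calc Cardinal.mk (Set R) ≤ Cardinal.mk R[X] := Cardinal.mk_le_of_injective hF
      _ ≤ max (Cardinal.mk R) Cardinal.aleph0 := cardinalMk_le_max
      _ = Cardinal.mk R := max_eq_left (Cardinal.aleph0_le_mk R)
  rw [Cardinal.mk_set] at hle
  exact hle.not_gt (Cardinal.cantor _)

theorem Polynomial.exists_mul_eq_one_of_eval_eq_zero {R : Type*} [Ring R] {f : R[X]} {r : R}
    (h0 : f.eval 0 = 1) (hr : f.eval r = 0) : ∃ s, s * r = 1 := by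
  have hdecomp : f.divX.eval r * r + 1 = 0 := by
    simpa only [eval_add, eval_mul_X, eval_C, coeff_zero_eq_eval_zero, h0, hr]
      using congrArg (eval r) (divX_mul_X_add f)
  exact ⟨-f.divX.eval r, by rw [neg_mul, eq_neg_of_add_eq_zero_left hdecomp, neg_neg]⟩

theorem isDomain_of_exists_mul_eq_one {R : Type*} [Ring R] [Nontrivial R]
    (h : ∀ r : R, r ≠ 0 → ∃ s, s * r = 1) : IsDomain R := by
  have : NoZeroDivisors R := by
    refine ⟨fun {a b} hab => or_iff_not_imp_left.mpr fun ha => ?_⟩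
    obtain ⟨s, hs⟩ := h a ha
    calc b = s * a * b := by rw [hs, one_mul]
      _ = 0 := by rw [mul_assoc, hab, mul_zero]
  exact NoZeroDivisors.to_isDomain R

/-- **Proposition 1.3.** Let `R` be a nonzero (not necessarily commutative) ring with identity
such that every characteristic (indicator) function of a subset of `R` is given by a polynomial
with coefficients in `R`. Then `R` is a finite field. -/
theorem stmt_2 {R : Type*} [Ring R] [Nontrivial R]
    (h : ∀ S : Set R, ∃ f : Polynomial R,
      ∀ r : R, (r ∈ S → f.eval r = 1) ∧ (r ∉ S → f.eval r = 0)) :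
    Finite R ∧ (∀ x y : R, x * y = y * x) ∧ (∀ x : R, x ≠ 0 → IsUnit x) := by
  choose F hF using h
  have hfin : Finite R := by
    refine finite_of_injective_set (F := F) (Function.LeftInverse.injective
      (g := fun f => {r | f.eval r = 1}) fun S => Set.ext fun r => ?_)
    by_cases hr : r ∈ S
    · simp [hr, (hF S r).1 hr]
    · simp [hr, (hF S r).2 hr]
  have hleft : ∀ r : R, r ≠ 0 → ∃ s, s * r = 1 := fun r hr =>
    exists_mul_eq_one_of_eval_eq_zero ((hF {0} 0).1 rfl) ((hF {0} r).2 hr)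
  have : IsDomain R := isDomain_of_exists_mul_eq_one hleft
  refine ⟨hfin, (Finite.isDomain_to_isField R).mul_comm, fun x hx => ?_⟩
  obtain ⟨s, hs⟩ := hleft x hx
  exact IsUnit.of_mul_eq_one_right s hs
end

section
/- Let A ⊆ B be commutative rings with unity (A a subring of B, or more generally suppose there is an injective unital ring homomorphism ι : A → B). Suppose there exists a polynomial f ∈ B[X] such that for every a ∈ A, f(ι(a)) = 0 if a = 0 and f(ι(a)) = 1 if a ≠ 0. Then A is a finite field. -/
/-!
Since `ι a - ι 0` divides `f(ι a) - f(ι 0) = 1`, the map `ι` sends every nonzero element of `A`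
to a unit of `B`. Composed with `B → B ⧸ m` for a maximal ideal `m`, it therefore stays injective,
so `A` embeds in a field and is a domain; and the image of `A` lies in the finite root set of the
nonzero polynomial `X * (f̄ - 1)`, where `f̄` is `f` reduced modulo `m`. A finite domain is a field.
-/

open Polynomial

theorem isUnit_of_eval_eq_one_of_eval_zero {R : Type*} [CommRing R] {f : R[X]} {x : R}
    (h0 : f.eval 0 = 0) (h1 : f.eval x = 1) : IsUnit x := by
  have hdvd := sub_dvd_eval_sub x 0 f
  rw [h0, h1, sub_zero, sub_zero] at hdvd
  exact isUnit_of_dvd_one hdvd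

theorem RingHom.injective_of_forall_ne_zero_isUnit {R S : Type*} [Ring R] [Semiring S]
    [Nontrivial S] (φ : R →+* S) (h : ∀ a, a ≠ 0 → IsUnit (φ a)) : Function.Injective φ := by
  refine (injective_iff_map_eq_zero φ).2 fun a ha => ?_
  by_contra hne
  exact not_isUnit_zero (ha ▸ h a hne)

theorem finite_of_injective_of_forall_isRoot {α K : Type*} [CommRing K] [IsDomain K]
    {φ : α → K} (hφ : Function.Injective φ) {p : K[X]} (hp : p ≠ 0)
    (hroot : ∀ a, p.IsRoot (φ a)) : Finite α := by
  have hpre : φ ⁻¹' {x | p.IsRoot x} = Set.univ := Set.eq_univ_of_forall hroot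
  rw [← Set.finite_univ_iff, ← hpre]
  exact (finite_setOfPred_isRoot hp).preimage hφ.injOn

theorem X_mul_sub_one_ne_zero {K : Type*} [Ring K] [Nontrivial K] {g : K[X]}
    (hg : g.eval 0 = 0) : X * (g - 1) ≠ 0 := by
  refine monic_X.mul_right_ne_zero fun h => ?_
  simpa [hg] using congrArg (eval 0) h

theorem stmt_3_general {A B : Type*} [CommRing A] [CommRing B] [Nontrivial B]
    (ι : A →+* B)
    (f : Polynomial B)
    (hf : ∀ a : A, (a = 0 → f.eval (ι a) = 0) ∧ (a ≠ 0 → f.eval (ι a) = 1)) :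
    Finite A ∧ IsField A := by
  obtain ⟨m, hm⟩ := Ideal.exists_maximal B
  let π : B →+* B ⧸ m := Ideal.Quotient.mk m
  have hf0 : f.eval 0 = 0 := by simpa using (hf 0).1 rfl
  have hφ : Function.Injective (π.comp ι) :=
    (π.comp ι).injective_of_forall_ne_zero_isUnit fun a ha =>
      (isUnit_of_eval_eq_one_of_eval_zero hf0 ((hf a).2 ha)).map π
  have : IsDomain A := hφ.isDomain
  have hroot : ∀ a, (X * (f.map π - 1)).IsRoot (π (ι a)) := by
    intro a
    by_cases ha : a = 0
    · simp [ha]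
    · simp [(hf a).2 ha]
  have hfin := finite_of_injective_of_forall_isRoot hφ
    (X_mul_sub_one_ne_zero (by simpa using congrArg π hf0)) hroot
  exact ⟨hfin, Finite.isField_of_domain A⟩

/-- **Proposition 2.1.** Let `A ⊆ B` be commutative rings with unity (via an injective unital
ring homomorphism `ι : A → B`). If there is a polynomial `f ∈ B[X]` with `f(ι a) = 0` for
`a = 0` and `f(ι a) = 1` for `a ≠ 0`, then `A` is a finite field. -/
theorem stmt_3 {A B : Type*} [CommRing A] [CommRing B] [Nontrivial A] [Nontrivial B]
    (ι : A →+* B) (hι : Function.Injective ι)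
    (f : Polynomial B)
    (hf : ∀ a : A, (a = 0 → f.eval (ι a) = 0) ∧ (a ≠ 0 → f.eval (ι a) = 1)) :
    Finite A ∧ IsField A :=
  stmt_3_general ι f hf
end

section
/- Let (R, 𝔪) be a commutative local ring with unity which is zero dimensional (every prime ideal of R is maximal) and has finite residue field R/𝔪. Then the group of units R* is a torsion group: for every unit u of R there exists a positive integer n with uⁿ = 1. -/
/-!
Modulo the maximal ideal `𝔪`, a unit `u` has finite order `m`, since the residue field is finite.
In dimension zero `𝔪` is the nilradical, so `u ^ m - 1` is nilpotent, and so is the characteristic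
`p` of the residue field viewed in `R`. A unipotent element `x` then has `p`-power order: for large
`M` the Frobenius kills `x - 1` modulo `p`, and each further `p`-th power gains a factor `p`.
-/

open IsLocalRing

theorem exists_pow_prime_pow_eq_one_of_isNilpotent_sub_one {R : Type*} [CommRing R] {p : ℕ}
    (hp : p.Prime) (hpR : IsNilpotent (p : R)) {x : R} (hx : IsNilpotent (x - 1)) :
    ∃ n, x ^ p ^ n = 1 := by
  obtain ⟨M, hM⟩ := hx
  obtain ⟨L, hL⟩ := hpR
  have hdvd : (p : R) ∣ x ^ p ^ M - 1 := by
    obtain ⟨r, hr⟩ := exists_add_pow_prime_pow_eq hp (x - 1) 1 M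
    rw [sub_add_cancel] at hr
    rw [hr, pow_eq_zero_of_le (Nat.lt_pow_self hp.one_lt).le hM]
    exact ⟨(x - 1) * r, by ring⟩
  have hpow : (p : R) ^ (L + 1) = 0 := by rw [pow_succ, hL, zero_mul]
  have hlift := dvd_sub_pow_of_dvd_sub hdvd L
  rw [hpow, zero_dvd_iff, sub_eq_zero, one_pow, ← pow_mul, ← pow_add] at hlift
  exact ⟨M + L, hlift⟩

theorem IsLocalRing.exists_pow_sub_one_mem_maximalIdeal {R : Type*} [CommRing R] [IsLocalRing R]
    [Finite (ResidueField R)] (u : Rˣ) : ∃ m, 0 < m ∧ (u : R) ^ m - 1 ∈ maximalIdeal R := by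
  obtain ⟨m, hm, hum⟩ := isOfFinOrder_iff_pow_eq_one.mp
    (isOfFinOrder_of_finite (Units.map (residue R : R →* ResidueField R) u))
  refine ⟨m, hm, (residue_eq_zero_iff _).mp ?_⟩
  simpa [sub_eq_zero, Units.ext_iff] using hum

/-- **Proposition 2.3 (i).** Let `(R, 𝔪)` be a zero dimensional commutative local ring with
finite residue field. Then the group of units `Rˣ` is a torsion group. -/
theorem stmt_5 {R : Type*} [CommRing R] [IsLocalRing R]
    (hdim : ∀ P : Ideal R, P.IsPrime → P.IsMaximal)
    (hres : Finite (IsLocalRing.ResidueField R)) :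
    ∀ u : Rˣ, ∃ n : ℕ, 0 < n ∧ u ^ n = 1 := by
  have : Ring.KrullDimLE 0 R := Ring.krullDimLE_zero_iff.mpr hdim
  intro u
  set p := ringChar (ResidueField R)
  have hp : p.Prime := CharP.char_is_prime (ResidueField R) p
  have hpR : IsNilpotent (p : R) := Ring.KrullDimLE.isNilpotent_iff_mem_maximalIdeal.mpr <|
    (residue_eq_zero_iff _).mp (by simp [p])
  obtain ⟨m, hm, hum⟩ := exists_pow_sub_one_mem_maximalIdeal u
  obtain ⟨k, hk⟩ := exists_pow_prime_pow_eq_one_of_isNilpotent_sub_one hp hpR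
    (Ring.KrullDimLE.isNilpotent_iff_mem_maximalIdeal.mpr hum)
  exact ⟨m * p ^ k, Nat.mul_pos hm (pow_pos hp.pos k), Units.ext (by simpa [pow_mul] using hk)⟩
end

section
/- Let (R, 𝔪) be a commutative local ring with unity which is zero dimensional (every prime ideal of R is maximal) and has finite residue field R/𝔪. Then R has finite index of nilpotency (there exists a positive integer r such that aʳ = 0 for every nilpotent a ∈ R) if and only if the group of units R* has finite exponent (there exists a positive integer m such that uᵐ = 1 for every unit u ∈ R). -/
/-!
Let `p` be the characteristic of the residue field `k`, so `p ∈ 𝔪` is nilpotent and every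
integer prime to `p` is a unit of `R`.

If `aʳ = 0` for all nilpotent `a`, then `pʳ = 0`, and every unit `u` has `u^(|k|-1) = 1 + n`
with `nʳ = 0`. Modulo `p`, raising `1 + n` to the power `pʳ` kills `n`, and each further
`p`-th power gains a factor `p`, so `(1 + n)^(p^(2r)) = 1`.

Conversely, write the exponent as `m = pᵏ m'` with `p ∤ m'`. For nilpotent `a`,
`(1 + a)^(pᵏ) = 1 + c` with `c ≡ a^(pᵏ) mod p` nilpotent, and `(1 + c)^m' = 1` with `m'` a
unit forces `c = 0`. Hence `a^(pᵏ) ∈ pR`, and `a^(pᵏ(s+1)) = 0` where `pˢ = 0`.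
-/

open IsLocalRing

/-- `(1 + b)ⁿ - 1 = b · (n + nilpotent)`, and the second factor is a unit. -/
theorem eq_zero_of_one_add_pow_eq_one {R : Type*} [CommRing R] {b : R} {n : ℕ}
    (hb : IsNilpotent b) (hn : IsUnit (n : R)) (h : (1 + b) ^ n = 1) : b = 0 := by
  set S := ∑ i ∈ Finset.range n, (1 + b) ^ i
  obtain ⟨c, hc⟩ : b ∣ S - n := by
    have hS : S - n = ∑ i ∈ Finset.range n, ((1 + b) ^ i - 1 ^ i) := by
      simp [S, Finset.sum_sub_distrib]
    rw [hS]
    exact Finset.dvd_sum fun i _ => by simpa using sub_dvd_pow_sub_pow (1 + b) 1 i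
  have hS_unit : IsUnit S := by
    rw [show S = n + b * c by rw [← hc]; ring]
    exact ((Commute.all b c).isNilpotent_mul_right hb).isUnit_add_left_of_commute hn
      (Commute.all _ _)
  have hSb : S * b = 0 := by simpa [S, h] using geom_sum_mul (1 + b) n
  exact hS_unit.mul_right_eq_zero.mp hSb

theorem one_add_pow_prime_pow_mul_self_eq_one {R : Type*} [CommRing R] {p r : ℕ}
    [hp : Fact p.Prime] {n : R} (hpr : (p : R) ^ r = 0) (hnr : n ^ r = 0) :
    (1 + n) ^ (p ^ r * p ^ r) = 1 := by
  obtain ⟨t, ht⟩ := exists_add_pow_prime_pow_eq hp.out (1 : R) n r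
  have hn_pow : n ^ p ^ r = 0 := pow_eq_zero_of_le (Nat.lt_pow_self hp.out.one_lt).le hnr
  have hdvd : (p : R) ∣ (1 + n) ^ p ^ r - 1 := ⟨n * t, by rw [ht, hn_pow]; ring⟩
  have hdvd' := dvd_sub_pow_of_dvd_sub hdvd r
  rw [one_pow, pow_succ, hpr, zero_mul, zero_dvd_iff, sub_eq_zero, ← pow_mul] at hdvd'
  exact hdvd'

theorem pow_prime_pow_mul_eq_zero_of_one_add_pow_eq_one {R : Type*} [CommRing R] {p s k m : ℕ}
    [hp : Fact p.Prime] {a : R} (hps : (p : R) ^ s = 0) (hm : IsUnit (m : R))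
    (ha : IsNilpotent a) (h : (1 + a) ^ (p ^ k * m) = 1) : a ^ (p ^ k * (s + 1)) = 0 := by
  obtain ⟨t, ht⟩ := exists_add_pow_prime_pow_eq hp.out (1 : R) a k
  have hc_nil : IsNilpotent (a ^ p ^ k + p * a * t) := by
    rw [← mem_nilradical] at ha ⊢
    exact add_mem (Ideal.pow_mem_of_mem _ ha _ (pow_pos hp.out.pos k))
      (Ideal.mul_mem_right _ _ (Ideal.mul_mem_left _ _ ha))
  have hc : a ^ p ^ k + p * a * t = 0 := by
    refine eq_zero_of_one_add_pow_eq_one hc_nil hm ?_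
    rwa [pow_mul, ht, one_pow, mul_one, add_assoc] at h
  rw [pow_mul, eq_neg_of_add_eq_zero_left hc, neg_pow, mul_pow, mul_pow, pow_succ (p : R), hps]
  ring

namespace IsLocalRing

variable {R : Type*} [CommRing R] [IsLocalRing R]

theorem natCast_ringChar_mem_maximalIdeal : (ringChar (ResidueField R) : R) ∈ maximalIdeal R := by
  rw [← residue_eq_zero_iff, map_natCast, ringChar.Nat.cast_ringChar]

theorem isUnit_natCast_of_not_ringChar_dvd {n : ℕ} (h : ¬ ringChar (ResidueField R) ∣ n) :
    IsUnit (n : R) := by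
  rw [← residue_ne_zero_iff_isUnit, map_natCast]
  exact mt (ringChar.spec _ n).mp h

theorem units_pow_card_sub_one_sub_one_mem_maximalIdeal [Fintype (ResidueField R)] (u : Rˣ) :
    (u : R) ^ (Fintype.card (ResidueField R) - 1) - 1 ∈ maximalIdeal R := by
  rw [← residue_eq_zero_iff, map_sub, map_pow, map_one, sub_eq_zero]
  exact FiniteField.pow_card_sub_one_eq_one _ ((residue_ne_zero_iff_isUnit _).mpr u.isUnit)

end IsLocalRing

/-- **Proposition 2.3 (ii).** Let `(R, 𝔪)` be a zero dimensional commutative local ring with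
finite residue field. Then `R` has finite index of nilpotency if and only if the group of
units `Rˣ` has finite exponent. -/
theorem stmt_6 {R : Type*} [CommRing R] [IsLocalRing R]
    (hdim : ∀ P : Ideal R, P.IsPrime → P.IsMaximal)
    (hres : Finite (IsLocalRing.ResidueField R)) :
    (∃ r : ℕ, 0 < r ∧ ∀ a : R, IsNilpotent a → a ^ r = 0) ↔
    (∃ m : ℕ, 0 < m ∧ ∀ u : Rˣ, u ^ m = 1) := by
  have := Ring.KrullDimLE.mk₀ hdim
  have := Fintype.ofFinite (ResidueField R)
  set p := ringChar (ResidueField R)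
  have hp : Fact p.Prime := ⟨CharP.prime_ringChar _⟩
  have hp_pos : 0 < p := hp.out.pos
  have hp_nil : IsNilpotent (p : R) :=
    Ring.KrullDimLE.isNilpotent_iff_mem_maximalIdeal.mpr natCast_ringChar_mem_maximalIdeal
  constructor
  · rintro ⟨r, -, hr⟩
    refine ⟨(Fintype.card (ResidueField R) - 1) * (p ^ r * p ^ r),
      Nat.mul_pos (Nat.sub_pos_of_lt Fintype.one_lt_card) (by positivity), fun u => ?_⟩
    have hn := hr _ (Ring.KrullDimLE.isNilpotent_iff_mem_maximalIdeal.mpr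
      (units_pow_card_sub_one_sub_one_mem_maximalIdeal u))
    ext
    rw [Units.val_pow_eq_pow_val, pow_mul, Units.val_one]
    simpa only [add_sub_cancel] using one_add_pow_prime_pow_mul_self_eq_one (hr _ hp_nil) hn
  · rintro ⟨m, hm, hu⟩
    obtain ⟨s, hs⟩ := hp_nil
    refine ⟨p ^ m.factorization p * (s + 1), by positivity, fun a ha => ?_⟩
    refine pow_prime_pow_mul_eq_zero_of_one_add_pow_eq_one hs
      (isUnit_natCast_of_not_ringChar_dvd (Nat.not_dvd_ordCompl hp.out hm.ne')) ha ?_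
    obtain ⟨v, hv⟩ := ha.isUnit_one_add
    rw [Nat.ordProj_mul_ordCompl_eq_self, ← hv, ← Units.val_pow_eq_pow_val, hu, Units.val_one]
end

section
/- Let B be a commutative ring with unity, f ∈ B[X] a polynomial, and A a subring of B such that the image f(A) = {f(a) : a ∈ A} is finite and, for every minimal prime ideal 𝔭 of B, the reduction of f modulo 𝔭 is not constant on the image of A (i.e., there exist a, a' ∈ A with f(a) − f(a') ∉ 𝔭). Then A is residually finite, and more precisely, for every maximal ideal 𝔪 of A, the residue field A/𝔪 is finite with cardinality at most |f(A)| · deg f. -/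
/-!
Fix a maximal ideal `𝔪` of `A`. Since `A ⊆ B`, some minimal prime `𝔭` of `B` contracts into `𝔪`,
so `A ⧸ 𝔪` is a quotient of the image of `A` in the domain `B ⧸ 𝔭`. Modulo `𝔭` the polynomial `f`
is nonconstant, so each of its fibres has at most `deg f` points, and the image of `A` is covered
by the fibres over the `|f(A)|` values of `f` on `A`.
-/

open Polynomial

theorem Polynomial.ncard_le_natDegree_mul_ncard_image_eval {R : Type*} [CommRing R] [IsDomain R]
    {p : R[X]} (hp : 0 < p.degree) {S : Set R} (hS : ((fun x => p.eval x) '' S).Finite) :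
    S.Finite ∧ S.ncard ≤ p.natDegree * ((fun x => p.eval x) '' S).ncard := by
  classical
  have hfiber (c : R) : (fun x => p.eval x) ⁻¹' {c} = ↑(p - C c).roots.toFinset := by
    ext; simp [mem_roots_sub_C hp]
  have hSfin : S.Finite := (hS.preimage' fun c _ => hfiber c ▸ Finset.finite_toSet _).subset
    (Set.subset_preimage_image _ _)
  refine ⟨hSfin, ?_⟩
  lift S to Finset R using hSfin
  rw [← Finset.coe_image, Set.ncard_coe_finset, Set.ncard_coe_finset]
  refine Finset.card_le_mul_card_image S _ fun c _ => ?_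
  calc (S.filter fun x => p.eval x = c).card ≤ (p - C c).roots.toFinset.card :=
        Finset.card_le_card fun x hx => by
          rw [← Finset.mem_coe, ← hfiber c]
          exact (Finset.mem_filter.mp hx).2
    _ ≤ Multiset.card (p - C c).roots := Multiset.toFinset_card_le _
    _ ≤ p.natDegree := card_roots_sub_C' hp

theorem Ideal.Quotient.finite_and_natCard_le_of_ker_le {R T : Type*} [CommRing R] [Ring T]
    (φ : R →+* T) {I : Ideal R} (h : RingHom.ker φ ≤ I) (hfin : (Set.range φ).Finite) :
    Finite (R ⧸ I) ∧ Nat.card (R ⧸ I) ≤ (Set.range φ).ncard := by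
  have : Finite (Set.range φ) := hfin
  let σ : Set.range φ → R ⧸ I := fun y => Ideal.Quotient.mk I y.2.choose
  have hσ : Function.Surjective σ := by
    rintro ⟨r⟩
    refine ⟨⟨φ r, r, rfl⟩, Ideal.Quotient.eq.mpr (h ?_)⟩
    exact (RingHom.sub_mem_ker_iff φ).mpr (Exists.choose_spec (p := fun x => φ x = φ r) _)
  exact ⟨Finite.of_surjective σ hσ, Nat.card_le_card_of_surjective σ hσ⟩

theorem Ideal.exists_minimalPrimes_comap_le_of_injective {R S : Type*} [CommRing R] [CommRing S]
    {f : R →+* S} (hf : Function.Injective f) (J : Ideal R) [J.IsPrime] :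
    ∃ 𝔭 ∈ minimalPrimes S, 𝔭.comap f ≤ J := by
  obtain ⟨q, hq, hqJ⟩ := Ideal.exists_minimalPrimes_le (bot_le : ⊥ ≤ J)
  rw [← Ideal.comap_bot_of_injective f hf] at hq
  obtain ⟨𝔭, h𝔭, rfl⟩ := Ideal.exists_minimalPrimes_comap_eq f q hq
  exact ⟨𝔭, h𝔭, hqJ⟩

theorem Polynomial.ncard_image_le_ncard_image_eval_mul_natDegree {B K : Type*} [CommRing B]
    [CommRing K] [IsDomain K] (π : B →+* K) (f : B[X]) {S : Set B}
    (hfin : ((fun b => f.eval b) '' S).Finite)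
    (hnc : ∃ a ∈ S, ∃ a' ∈ S, π (f.eval a) ≠ π (f.eval a')) :
    (π '' S).Finite ∧ (π '' S).ncard ≤ ((fun b => f.eval b) '' S).ncard * f.natDegree := by
  set g := f.map π
  have heval (b : B) : g.eval (π b) = π (f.eval b) := by rw [eval_map, eval₂_hom]
  have himage : (fun x => g.eval x) '' (π '' S) = π '' ((fun b => f.eval b) '' S) := by
    simp only [Set.image_image, heval]
  have hg : 0 < g.degree := by
    obtain ⟨a, ha, a', ha', hne⟩ := hnc
    by_contra! hle
    rw [← heval, ← heval, eq_C_of_degree_le_zero hle, eval_C, eval_C] at hne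
    exact hne rfl
  obtain ⟨hfin', hcard⟩ := ncard_le_natDegree_mul_ncard_image_eval hg (S := π '' S)
    (himage ▸ hfin.image π)
  refine ⟨hfin', hcard.trans ?_⟩
  rw [himage, mul_comm]
  exact Nat.mul_le_mul (Set.ncard_image_le hfin) natDegree_map_le

theorem stmt_7_general {B : Type*} [CommRing B] (A : Subring B) (f : Polynomial B)
    (hfin : (Set.image (fun b => f.eval b) (A : Set B)).Finite)
    (hnc : ∀ 𝔭 ∈ minimalPrimes B, ∃ a a' : A, f.eval (a : B) - f.eval (a' : B) ∉ 𝔭) :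
    ∀ 𝔪 : Ideal A, 𝔪.IsMaximal →
      Finite (A ⧸ 𝔪) ∧
      Nat.card (A ⧸ 𝔪) ≤ Nat.card (Set.image (fun b => f.eval b) (A : Set B)) * f.natDegree := by
  intro 𝔪 h𝔪
  obtain ⟨𝔭, h𝔭, h𝔭𝔪⟩ :=
    Ideal.exists_minimalPrimes_comap_le_of_injective A.subtype_injective 𝔪
  have : 𝔭.IsPrime := h𝔭.1.1
  set φ := (Ideal.Quotient.mk 𝔭).comp A.subtype
  have hker : RingHom.ker φ = 𝔭.comap A.subtype := by
    ext; simp [φ, Ideal.Quotient.eq_zero_iff_mem]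
  have hrange : Set.range φ = Ideal.Quotient.mk 𝔭 '' A := by
    simp [φ, Set.range_comp]
  obtain ⟨a, a', hne⟩ := hnc 𝔭 h𝔭
  have hnc𝔭 : Ideal.Quotient.mk 𝔭 (f.eval a) ≠ Ideal.Quotient.mk 𝔭 (f.eval a') := by
    rwa [Ne, ← sub_eq_zero, ← map_sub, Ideal.Quotient.eq_zero_iff_mem]
  obtain ⟨hfin', hcard⟩ := ncard_image_le_ncard_image_eval_mul_natDegree
    (Ideal.Quotient.mk 𝔭) f hfin ⟨a, a.2, a', a'.2, hnc𝔭⟩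
  obtain ⟨hA, hcardA⟩ :=
    Ideal.Quotient.finite_and_natCard_le_of_ker_le φ (hker.trans_le h𝔭𝔪) (hrange ▸ hfin')
  exact ⟨hA, hcardA.trans (hrange ▸ hcard)⟩

/-- **Lemma 2.4.** Let `B` be a commutative ring, `f ∈ B[X]`, and `A` a subring of `B` such
that `f(A)` is finite and the reduction of `f` modulo any minimal prime of `B` is not constant
on `A`. Then `A` is residually finite with `|A/𝔪| ≤ |f(A)| · deg f` for every maximal ideal
`𝔪` of `A`. -/
theorem stmt_7 {B : Type*} [CommRing B] [Nontrivial B] (A : Subring B) (f : Polynomial B)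
    (hfin : (Set.image (fun b => f.eval b) (A : Set B)).Finite)
    (hnc : ∀ 𝔭 ∈ minimalPrimes B, ∃ a a' : A, f.eval (a : B) - f.eval (a' : B) ∉ 𝔭) :
    ∀ 𝔪 : Ideal A, 𝔪.IsMaximal →
      Finite (A ⧸ 𝔪) ∧
      Nat.card (A ⧸ 𝔪) ≤ Nat.card (Set.image (fun b => f.eval b) (A : Set B)) * f.natDegree :=
  stmt_7_general A f hfin hnc
end

section
/- Let R be a commutative ring with unity and f ∈ R[X] a polynomial such that the image f(R) = {f(r) : r ∈ R} is finite and, for every maximal ideal 𝔪 of R, the function induced by f on R/𝔪 is non-constant (i.e., there exist a, b ∈ R with f(a) − f(b) ∉ 𝔪). Then R is zero dimensional (every prime ideal of R is maximal) and for every prime ideal 𝔭 of R the quotient R/𝔭 is finite; in particular every residue field of R is finite. -/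
/-!
Modulo a prime `P`, the polynomial `f` still takes only finitely many values on the domain `R ⧸ P`.
If that domain were infinite, some value would be taken infinitely often, so `f mod P` would be
constant, contradicting non-constancy modulo a maximal ideal containing `P`. Hence `R ⧸ P` is a
finite domain, i.e. a field, and `P` is maximal.
-/

open Polynomial

theorem Polynomial.exists_eq_C_of_finite_range_eval {K : Type*} [CommRing K] [IsDomain K]
    [Infinite K] {p : K[X]} (h : (Set.range fun x => p.eval x).Finite) : ∃ c, p = C c := by
  have := h.to_subtype
  obtain ⟨⟨c, _⟩, hc⟩ := Finite.exists_infinite_fiber (Set.rangeFactorization fun x => p.eval x)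
  refine ⟨c, eq_of_infinite_eval_eq p (C c) ?_⟩
  convert Set.infinite_coe_iff.mp hc using 1
  ext
  simp [Set.rangeFactorization, Subtype.ext_iff]

theorem Polynomial.range_eval_map_of_surjective {R S : Type*} [CommSemiring R] [CommSemiring S]
    {φ : R →+* S} (hφ : Function.Surjective φ) (p : R[X]) :
    (Set.range fun x => (p.map φ).eval x) = φ '' Set.range fun x => p.eval x := by
  ext
  simp [eval_map, eval₂_at_apply, hφ.exists]

theorem Ideal.finite_quotient_of_finite_range_eval {R : Type*} [CommRing R] {P : Ideal R}
    [P.IsPrime] {f : R[X]} (hfin : (Set.range fun r => f.eval r).Finite)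
    (hnc : ∃ a b : R, f.eval a - f.eval b ∉ P) : Finite (R ⧸ P) := by
  by_contra hinf
  have := not_finite_iff_infinite.mp hinf
  obtain ⟨a, b, hab⟩ := hnc
  have hfin' : (Set.range fun x => (f.map (Quotient.mk P)).eval x).Finite := by
    rw [range_eval_map_of_surjective Quotient.mk_surjective]
    exact hfin.image _
  obtain ⟨c, hc⟩ := exists_eq_C_of_finite_range_eval hfin'
  have heval (r : R) : Quotient.mk P (f.eval r) = c := by
    rw [← eval₂_at_apply, ← eval_map, hc, eval_C]
  apply hab
  rw [← Quotient.eq_zero_iff_mem, map_sub, heval, heval, sub_self]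

theorem stmt_8_general {R : Type*} [CommRing R] (f : Polynomial R)
    (hfin : (Set.range fun r => f.eval r).Finite)
    (hnc : ∀ 𝔪 : Ideal R, 𝔪.IsMaximal → ∃ a b : R, f.eval a - f.eval b ∉ 𝔪) :
    (∀ P : Ideal R, P.IsPrime → P.IsMaximal) ∧
    (∀ P : Ideal R, P.IsPrime → Finite (R ⧸ P)) := by
  have hfinite (P : Ideal R) (hP : P.IsPrime) : Finite (R ⧸ P) := by
    obtain ⟨𝔪, h𝔪, hP𝔪⟩ := P.exists_le_maximal hP.ne_top
    obtain ⟨a, b, hab⟩ := hnc 𝔪 h𝔪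
    exact Ideal.finite_quotient_of_finite_range_eval hfin ⟨a, b, fun h => hab (hP𝔪 h)⟩
  refine ⟨fun P hP => ?_, hfinite⟩
  have := hfinite P hP
  exact Ideal.Quotient.maximal_of_isField P (Finite.isField_of_domain _)

/-- **Lemma 2.5 (first part).** Let `R` be a commutative ring with unity and `f ∈ R[X]` with
`f(R)` finite such that `f` induces a non-constant function modulo every maximal ideal of `R`.
Then `R` is zero dimensional and `R/𝔭` is finite for every prime ideal `𝔭`; in particular
every residue field of `R` is finite. -/
theorem stmt_8 {R : Type*} [CommRing R] [Nontrivial R] (f : Polynomial R)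
    (hfin : (Set.range fun r => f.eval r).Finite)
    (hnc : ∀ 𝔪 : Ideal R, 𝔪.IsMaximal → ∃ a b : R, f.eval a - f.eval b ∉ 𝔪) :
    (∀ P : Ideal R, P.IsPrime → P.IsMaximal) ∧
    (∀ P : Ideal R, P.IsPrime → Finite (R ⧸ P)) :=
  stmt_8_general f hfin hnc
end

section
/- Let R be a commutative ring with unity and f ∈ R[X] a polynomial such that the image f(R) = {f(r) : r ∈ R} is finite and, for every maximal ideal 𝔪 of R, the function induced by f on R/𝔪 is non-constant (i.e., there exist a, b ∈ R with f(a) − f(b) ∉ 𝔪). Then R has only finitely many maximal ideals, and the number of maximal ideals of R is at most Ω(|f(R)|), the number of prime factors of the cardinality of f(R) counted with multiplicity. -/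
open Polynomial

lemma my_aux_eval_mul {R : Type*} [CommRing R] {e : R} (he : IsIdempotentElem e)
    (f : Polynomial R) (x : R) : e * f.eval x = e * f.eval (e * x) := by
  induction f using Polynomial.induction_on' with
  | add p q hp hq => simp only [eval_add, mul_add, hp, hq]
  | monomial n a =>
      simp only [eval_monomial]
      rw [mul_pow]
      calc e * (a * x ^ n) = a * (e ^ (n + 1) * x ^ n) := by rw [he.pow_succ_eq]; ring
        _ = e * (a * (e ^ n * x ^ n)) := by rw [pow_succ]; ring

lemma my_card_le_omega {ι : Type*} (s : Finset ι) (g : ι → ℕ) (hg : ∀ i ∈ s, 2 ≤ g i) :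
    s.card ≤ (∏ i ∈ s, g i).primeFactorsList.length := by
  classical
  induction s using Finset.cons_induction with
  | empty => simp
  | cons a s has ih =>
      rw [Finset.prod_cons, Finset.card_cons]
      have ha : g a ≠ 0 := by have := hg a (Finset.mem_cons_self a s); omega
      have hs : (∏ i ∈ s, g i) ≠ 0 :=
        Finset.prod_ne_zero_iff.mpr fun i hi => by
          have := hg i (Finset.mem_cons_of_mem hi); omega
      have hperm := Nat.perm_primeFactorsList_mul ha hs
      rw [hperm.length_eq, List.length_append]
      have h1 : 1 ≤ (g a).primeFactorsList.length := by
        obtain ⟨p, hp, hpd⟩ := Nat.exists_prime_and_dvd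
          (by have := hg a (Finset.mem_cons_self a s); omega : g a ≠ 1)
        have : p ∈ (g a).primeFactorsList :=
          (Nat.mem_primeFactorsList_iff_dvd (by omega) hp).mpr hpd
        exact List.length_pos_iff.mpr (List.ne_nil_of_mem this)
      have h2 := ih (fun i hi => hg i (Finset.mem_cons_of_mem hi))
      omega

lemma my_prime_isMaximal {R : Type*} [CommRing R] [Nontrivial R] (f : Polynomial R)
    (hfin : (Set.range fun r => f.eval r).Finite)
    (hnc : ∀ 𝔪 : Ideal R, 𝔪.IsMaximal → ∃ a b : R, f.eval a - f.eval b ∉ 𝔪)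
    (𝔭 : Ideal R) (h𝔭 : 𝔭.IsPrime) : 𝔭.IsMaximal := by
  classical
  obtain ⟨𝔪, h𝔪, h𝔭𝔪⟩ := Ideal.exists_le_maximal 𝔭 h𝔭.ne_top
  haveI := h𝔭
  have hfin𝔭 : Finite (R ⧸ 𝔭) := by
    by_contra hinf
    rw [not_finite_iff_infinite] at hinf
    set g := f.map (Ideal.Quotient.mk 𝔭) with hg
    have hcomm : ∀ r : R, g.eval (Ideal.Quotient.mk 𝔭 r) = Ideal.Quotient.mk 𝔭 (f.eval r) := by
      intro r
      rw [hg, Polynomial.eval_map, Polynomial.eval₂_hom]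
    have hrange : (Set.range fun x => g.eval x).Finite := by
      have hsub : (Set.range fun x => g.eval x) ⊆
          (Ideal.Quotient.mk 𝔭) '' (Set.range fun r => f.eval r) := by
        rintro _ ⟨x, rfl⟩
        obtain ⟨r, rfl⟩ := Ideal.Quotient.mk_surjective x
        exact ⟨f.eval r, ⟨r, rfl⟩, (hcomm r).symm⟩
      exact (hfin.image _).subset hsub
    obtain ⟨c, hc⟩ : ∃ c, {x : R ⧸ 𝔭 | g.eval x = c}.Infinite := by
      by_contra h
      push_neg at h
      have huniv : (Set.univ : Set (R ⧸ 𝔭)) ⊆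
          ⋃ c ∈ (Set.range fun x => g.eval x), {x : R ⧸ 𝔭 | g.eval x = c} := by
        intro x _
        exact Set.mem_biUnion ⟨x, rfl⟩ rfl
      exact Set.infinite_univ ((hrange.biUnion fun c _ => h c).subset huniv)
    have hzero : g - C c = 0 := by
      apply Polynomial.eq_zero_of_infinite_isRoot
      apply hc.mono
      intro x hx
      simp only [Set.mem_setOf_eq] at hx ⊢
      simp [Polynomial.IsRoot, hx]
    have hconst : ∀ r : R, Ideal.Quotient.mk 𝔭 (f.eval r) = c := by
      intro r
      have := sub_eq_zero.mp (by
        have : (g - C c).eval (Ideal.Quotient.mk 𝔭 r) = 0 := by rw [hzero]; simp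
        simpa using this)
      rw [← hcomm r, this]
    obtain ⟨a, b, hab⟩ := hnc 𝔪 h𝔪
    exact hab (h𝔭𝔪 (by
      rw [← Ideal.Quotient.eq_zero_iff_mem, map_sub, hconst, hconst, sub_self]))
  haveI : IsDomain (R ⧸ 𝔭) := Ideal.Quotient.isDomain 𝔭
  exact Ideal.Quotient.maximal_of_isField 𝔭 (Finite.isField_of_domain _)

lemma my_max_finite {R : Type*} [CommRing R] [Nontrivial R] (f : Polynomial R)
    (hfin : (Set.range fun r => f.eval r).Finite)
    (hnc : ∀ 𝔪 : Ideal R, 𝔪.IsMaximal → ∃ a b : R, f.eval a - f.eval b ∉ 𝔪) :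
    {I : Ideal R | I.IsMaximal}.Finite := by
  classical
  set S := (Set.range fun r => f.eval r) with hS
  haveI : Finite ↥S := hfin.to_subtype
  have hinj : Function.Injective (fun 𝔪 : {I : Ideal R | I.IsMaximal} =>
      ({p : ↥S × ↥S | (p.1 : R) - (p.2 : R) ∈ (𝔪 : Ideal R)} : Set (↥S × ↥S))) := by
    intro 𝔪 𝔪' hEq
    by_contra hne
    have hne' : (𝔪 : Ideal R) ≠ (𝔪' : Ideal R) := fun h => hne (Subtype.ext h)
    have hcop := Ideal.IsMaximal.coprime_of_ne 𝔪.2 𝔪'.2 hne'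
    have h1mem : (1 : R) ∈ (𝔪 : Ideal R) ⊔ (𝔪' : Ideal R) := by rw [hcop]; trivial
    obtain ⟨m, hm, m', hm', hmm'⟩ := Submodule.mem_sup.mp h1mem
    obtain ⟨a, b, hab⟩ := hnc 𝔪 𝔪.2
    set r := m' * a + m * b with hr
    have hra : r - a ∈ (𝔪 : Ideal R) := by
      have : r - a = m * (b - a) := by
        have : m' = 1 - m := by linear_combination hmm'
        rw [hr, this]; ring
      rw [this]; exact Ideal.mul_mem_right _ _ hm
    have hrb : r - b ∈ (𝔪' : Ideal R) := by
      have : r - b = m' * (a - b) := by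
        have : m = 1 - m' := by linear_combination hmm'
        rw [hr, this]; ring
      rw [this]; exact Ideal.mul_mem_right _ _ hm'
    have hfra : f.eval r - f.eval a ∈ (𝔪 : Ideal R) := by
      obtain ⟨c, hc⟩ := Polynomial.sub_dvd_eval_sub r a f
      rw [hc]; exact Ideal.mul_mem_right _ _ hra
    have hfrb : f.eval r - f.eval b ∈ (𝔪' : Ideal R) := by
      obtain ⟨c, hc⟩ := Polynomial.sub_dvd_eval_sub r b f
      rw [hc]; exact Ideal.mul_mem_right _ _ hrb
    have hmemS : ∀ x : R, f.eval x ∈ S := fun x => ⟨x, rfl⟩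
    simp only [Set.ext_iff, Set.mem_setOf_eq] at hEq
    have h1 := (hEq (⟨⟨f.eval r, hmemS r⟩, ⟨f.eval a, hmemS a⟩⟩ : ↥S × ↥S)).mp hfra
    have hfab' : f.eval a - f.eval b ∈ (𝔪' : Ideal R) := by
      have := Ideal.sub_mem _ hfrb h1
      simpa using this
    exact hab ((hEq (⟨⟨f.eval a, hmemS a⟩, ⟨f.eval b, hmemS b⟩⟩ : ↥S × ↥S)).mpr hfab')
  haveI : Finite {I : Ideal R | I.IsMaximal} := Finite.of_injective _ hinj
  exact Set.toFinite _

/-- **Lemma 2.5 (second part).** Let `R` be a commutative ring with unity and `f ∈ R[X]` with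
`f(R)` finite such that `f` induces a non-constant function modulo every maximal ideal of `R`.
Then `R` has finitely many maximal ideals, and their number is at most `Ω(|f(R)|)`, the number
of prime factors of `|f(R)|` counted with multiplicity. -/
theorem stmt_9 {R : Type*} [CommRing R] [Nontrivial R] (f : Polynomial R)
    (hfin : (Set.range fun r => f.eval r).Finite)
    (hnc : ∀ 𝔪 : Ideal R, 𝔪.IsMaximal → ∃ a b : R, f.eval a - f.eval b ∉ 𝔪) :
    {I : Ideal R | I.IsMaximal}.Finite ∧
    Nat.card {I : Ideal R | I.IsMaximal} ≤
      (Nat.card (Set.range fun r => f.eval r)).primeFactorsList.length := by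
  classical
  have hMfin := my_max_finite f hfin hnc
  refine ⟨hMfin, ?_⟩
  set S := (Set.range fun r => f.eval r) with hS
  haveI : Finite ↥S := hfin.to_subtype
  set M := {I : Ideal R | I.IsMaximal} with hM
  haveI fM : Fintype ↥M := hMfin.fintype
  set π : R →+* ∀ i : ↥M, R ⧸ (i : Ideal R) :=
    Pi.ringHom (fun i : ↥M => Ideal.Quotient.mk (i : Ideal R)) with hπ
  have hker : ∀ x ∈ RingHom.ker π, IsNilpotent x := by
    intro x hx
    rw [← mem_nilradical, nilradical_eq_sInf, Submodule.mem_sInf]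
    intro 𝔭 h𝔭
    have h𝔭max : Ideal.IsMaximal 𝔭 := my_prime_isMaximal f hfin hnc 𝔭 h𝔭
    have hx0 : π x = 0 := RingHom.mem_ker.mp hx
    have := congrFun hx0 ⟨𝔭, h𝔭max⟩
    exact Ideal.Quotient.eq_zero_iff_mem.mp this
  have hcop : Pairwise fun i j : ↥M => IsCoprime (i : Ideal R) (j : Ideal R) := by
    intro i j hij
    exact Ideal.isCoprime_iff_sup_eq.mpr
      (Ideal.IsMaximal.coprime_of_ne i.2 j.2 (fun h => hij (Subtype.ext h)))
  have hsingle : CompleteOrthogonalIdempotents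
      (fun i : ↥M => (Pi.single i 1 : ∀ j : ↥M, R ⧸ (j : Ideal R))) :=
    CompleteOrthogonalIdempotents.single _
  have hrange : ∀ i : ↥M,
      (Pi.single i 1 : ∀ j : ↥M, R ⧸ (j : Ideal R)) ∈ π.range := by
    intro i
    obtain ⟨r, hr⟩ := Ideal.exists_forall_sub_mem_ideal (I := fun j : ↥M => (j : Ideal R))
      hcop (fun j => if j = i then 1 else 0)
    refine ⟨r, funext fun j => ?_⟩
    by_cases hji : j = i
    · subst hji
      have : r - 1 ∈ (j : Ideal R) := by simpa using hr j
      show Ideal.Quotient.mk (j : Ideal R) r = _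
      rw [Pi.single_eq_same]
      rw [show (1 : R ⧸ (j : Ideal R)) = Ideal.Quotient.mk (j : Ideal R) 1 from rfl]
      exact (Ideal.Quotient.eq (I := (j : Ideal R))).mpr this
    · have : r - 0 ∈ (j : Ideal R) := by simpa [hji] using hr j
      show Ideal.Quotient.mk (j : Ideal R) r = _
      rw [Pi.single_eq_of_ne hji]
      exact Ideal.Quotient.eq_zero_iff_mem.mpr (by simpa using this)
  obtain ⟨e, hcoi, hπe⟩ :=
    CompleteOrthogonalIdempotents.lift_of_isNilpotent_ker π hker hsingle hrange
  have hmk : ∀ i j : ↥M, Ideal.Quotient.mk (j : Ideal R) (e i) =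
      (Pi.single (M := fun j : ↥M => R ⧸ (j : Ideal R)) i 1) j := by
    intro i j
    exact congrFun (congrFun hπe i) j
  have he_one : ∀ i : ↥M, 1 - e i ∈ (i : Ideal R) := by
    intro i
    have h := hmk i i
    rw [Pi.single_eq_same] at h
    have : Ideal.Quotient.mk (i : Ideal R) (1 - e i) = 0 := by
      rw [map_sub, h, map_one, sub_self]
    exact Ideal.Quotient.eq_zero_iff_mem.mp this
  set T : ↥M → Set R := fun i => Set.range (fun r : R => e i * f.eval r) with hT
  haveI hTfin : ∀ i, Finite ↥(T i) := by
    intro i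
    have hsub : T i ⊆ (fun x => e i * x) '' S := by
      rintro _ ⟨r, rfl⟩; exact ⟨f.eval r, ⟨r, rfl⟩, rfl⟩
    exact ((hfin.image _).subset hsub).to_subtype
  let Φ : ↥S → ∀ i : ↥M, ↥(T i) := fun s i => ⟨e i * (s : R), by
    obtain ⟨r, hr⟩ := s.2
    exact ⟨r, by dsimp only; rw [show f.eval r = (s : R) from hr]⟩⟩
  have hΦinj : Function.Injective Φ := by
    intro s s' h
    have h' : ∀ i, e i * (s : R) = e i * (s' : R) :=
      fun i => congrArg Subtype.val (congrFun h i)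
    apply Subtype.ext
    calc (s : R) = (∑ i, e i) * (s : R) := by rw [hcoi.complete, one_mul]
      _ = ∑ i, e i * (s : R) := Finset.sum_mul _ _ _
      _ = ∑ i, e i * (s' : R) := Finset.sum_congr rfl fun i _ => h' i
      _ = (∑ i, e i) * (s' : R) := (Finset.sum_mul _ _ _).symm
      _ = (s' : R) := by rw [hcoi.complete, one_mul]
  have hΦsurj : Function.Surjective Φ := by
    intro t
    have ht : ∀ i, ∃ r : R, e i * f.eval r = ((t i : R)) := fun i => (t i).2
    choose r hr using ht
    set ρ := ∑ i, e i * r i with hρ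
    refine ⟨⟨f.eval ρ, ⟨ρ, rfl⟩⟩, funext fun i => Subtype.ext ?_⟩
    show e i * f.eval ρ = (t i : R)
    have h1 : e i * ρ = e i * r i := by
      rw [hρ, Finset.mul_sum]
      rw [Finset.sum_eq_single i]
      · rw [← mul_assoc, (hcoi.idem i).eq]
      · intro j _ hji
        rw [← mul_assoc, hcoi.ortho (Ne.symm hji), zero_mul]
      · intro h; exact absurd (Finset.mem_univ i) h
    calc e i * f.eval ρ = e i * f.eval (e i * ρ) := my_aux_eval_mul (hcoi.idem i) f ρ
      _ = e i * f.eval (e i * r i) := by rw [h1]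
      _ = e i * f.eval (r i) := (my_aux_eval_mul (hcoi.idem i) f (r i)).symm
      _ = (t i : R) := hr i
  have hcard : Nat.card ↥S = ∏ i : ↥M, Nat.card ↥(T i) := by
    rw [Nat.card_eq_of_bijective Φ ⟨hΦinj, hΦsurj⟩]
    exact Nat.card_pi
  have h2 : ∀ i : ↥M, 2 ≤ Nat.card ↥(T i) := by
    intro i
    obtain ⟨a, b, hab⟩ := hnc i i.2
    have hne : (⟨e i * f.eval a, ⟨a, rfl⟩⟩ : ↥(T i)) ≠ ⟨e i * f.eval b, ⟨b, rfl⟩⟩ := by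
      intro h
      apply hab
      have h' : e i * f.eval a = e i * f.eval b := congrArg Subtype.val h
      have heq : f.eval a - f.eval b = (1 - e i) * (f.eval a - f.eval b) := by
        rw [sub_mul, one_mul, mul_sub, h']; ring
      rw [heq]
      exact Ideal.mul_mem_right _ _ (he_one i)
    have hnt : Nontrivial ↥(T i) := ⟨_, _, hne⟩
    exact by
      haveI := hTfin i
      exact Finite.one_lt_card_iff_nontrivial.mpr hnt
  have hfinal := my_card_le_omega (Finset.univ : Finset ↥M)
    (fun i => Nat.card ↥(T i)) (fun i _ => h2 i)
  calc Nat.card ↥M = (Finset.univ : Finset ↥M).card := by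
        rw [Nat.card_eq_fintype_card, Finset.card_univ]
    _ ≤ (∏ i : ↥M, Nat.card ↥(T i)).primeFactorsList.length := hfinal
    _ = (Nat.card ↥S).primeFactorsList.length := by rw [hcard]
end

section
/- Let R be a commutative ring with unity that admits a nontrivial polynomial characteristic function, i.e., there exist a subset S ⊆ R with S nonempty and S ≠ R, and a polynomial f ∈ R[X] such that f(r) = 1 for all r ∈ S and f(r) = 0 for all r ∉ S. Then R is a local ring (R has a unique maximal ideal). -/
/-! Since `a - b` divides `f(a) - f(b)`, a polynomial whose values differ by a unit at `a` and `b`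
forces `a - b` to be a unit. Let `f` induce the indicator function of `S`, with `s ∈ S` and
`t ∉ S`. For any `a`, the point `r = t + (s - t) a` satisfies `r - t = (s - t) a` and
`s - r = (s - t) (1 - a)`; as `f(r)` is `1` or `0`, one of these is a unit, so `a` or `1 - a` is a
unit. -/

namespace Polynomial

theorem isUnit_sub_of_isUnit_eval_sub {R : Type*} [CommRing R] (p : R[X]) {a b : R}
    (h : IsUnit (p.eval a - p.eval b)) : IsUnit (a - b) :=
  isUnit_of_dvd_unit (sub_dvd_eval_sub a b p) h

end Polynomial

open Polynomial in
theorem IsLocalRing.of_eval_eq_zero_or_eq_one {R : Type*} [CommRing R] [Nontrivial R]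
    (f : R[X]) {s t : R} (hs : f.eval s = 1) (ht : f.eval t = 0)
    (hf : ∀ r, f.eval r = 0 ∨ f.eval r = 1) : IsLocalRing R := by
  refine of_isUnit_or_isUnit_one_sub_self fun a ↦ ?_
  set r := t + (s - t) * a
  rcases hf r with hr | hr
  · have : IsUnit (s - r) := f.isUnit_sub_of_isUnit_eval_sub (by simp [hs, hr])
    rw [show s - r = (s - t) * (1 - a) by ring] at this
    exact Or.inr (IsUnit.mul_iff.mp this).2
  · have : IsUnit (r - t) := f.isUnit_sub_of_isUnit_eval_sub (by simp [hr, ht])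
    rw [show r - t = (s - t) * a by ring] at this
    exact Or.inl (IsUnit.mul_iff.mp this).2

/-- **Lemma 2.5 (consequence).** If a nonzero commutative ring with unity `R` admits a
nontrivial polynomial characteristic function (the indicator function of some nonempty proper
subset of `R` is given by a polynomial), then `R` is local. -/
theorem stmt_10 {R : Type*} [CommRing R] [Nontrivial R]
    (h : ∃ (S : Set R) (f : Polynomial R), S.Nonempty ∧ S ≠ Set.univ ∧
      (∀ r ∈ S, f.eval r = 1) ∧ (∀ r ∉ S, f.eval r = 0)) :
    IsLocalRing R := by
  obtain ⟨S, f, ⟨s, hs⟩, hS, h1, h0⟩ := h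
  obtain ⟨t, ht⟩ := (Set.ne_univ_iff_exists_notMem S).mp hS
  exact IsLocalRing.of_eval_eq_zero_or_eq_one f (h1 s hs) (h0 t ht)
    fun r ↦ (em (r ∈ S)).symm.imp (h0 r) (h1 r)
end

section
/- Let (R, 𝔪) be a commutative local ring with unity which is zero dimensional (every prime ideal of R is maximal) and has finite residue field R/𝔪. Then the following are equivalent: (i) there exists a polynomial f ∈ R[X] such that the image f(R) is finite and the reduction of f modulo 𝔪 induces a non-constant function on R/𝔪 (equivalently, there exist a, b ∈ R with f(a) − f(b) ∉ 𝔪); (ii) R admits a nontrivial polynomial characteristic function, i.e., there exist a nonempty proper subset S ⊆ R and g ∈ R[X] with g(r) = 1 for r ∈ S and g(r) = 0 for r ∉ S. -/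
/-!
If `f(R)` is finite and `f` is non-constant modulo `𝔪`, split the finitely many values of `f`
into those congruent to `f(a)` modulo `𝔪` and the others. Any two values from different classes
differ by a unit, so a polynomial `q` takes the value `1` on the first class and `0` on the
second, and `q ∘ f` is a characteristic function of the nonempty proper set of `r` with
`f(r) ≡ f(a)`. Conversely a characteristic function has image in `{0, 1}`, and `1 - 0 ∉ 𝔪`.
-/

open Polynomial

section Separation

variable {R : Type*} [CommRing R]

theorem exists_eval_isUnit_eval_eq_zero (T U : Finset R)
    (hTU : ∀ t ∈ T, ∀ u ∈ U, IsUnit (t - u)) :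
    ∃ h : R[X], (∀ t ∈ T, IsUnit (h.eval t)) ∧ ∀ u ∈ U, h.eval u = 0 := by
  refine ⟨∏ u ∈ U, (X - C u), fun t ht => ?_, fun u hu => ?_⟩
  · rw [eval_prod]
    exact Finset.prod_induction _ IsUnit (fun _ _ => IsUnit.mul) isUnit_one
      fun u hu => by simpa using hTU t ht u hu
  · rw [eval_prod]
    exact Finset.prod_eq_zero hu (by simp)

theorem exists_eval_eq_one_eval_eq_zero (T U : Finset R)
    (hTU : ∀ t ∈ T, ∀ u ∈ U, IsUnit (t - u)) :
    ∃ q : R[X], (∀ t ∈ T, q.eval t = 1) ∧ ∀ u ∈ U, q.eval u = 0 := by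
  obtain ⟨h, hT, hU⟩ := exists_eval_isUnit_eval_eq_zero T U hTU
  -- the factor `1 - h(t)⁻¹ h` vanishes at `t` and is `1` on `U`
  refine ⟨1 - ∏ t ∈ T, (1 - C (Ring.inverse (h.eval t)) * h), fun t ht => ?_, fun u hu => ?_⟩
  · have hfactor : (1 - C (Ring.inverse (h.eval t)) * h).eval t = 0 := by
      simp [Ring.inverse_mul_cancel _ (hT t ht)]
    rw [eval_sub, eval_one, eval_prod, Finset.prod_eq_zero ht hfactor, sub_zero]
  · simp [eval_prod, hU u hu]

end Separation

namespace IsLocalRing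

variable {R : Type*} [CommRing R] [IsLocalRing R]

theorem exists_eval_eq_one_of_sub_mem_maximalIdeal (V : Finset R) (c : R) :
    ∃ q : R[X], (∀ v ∈ V, v - c ∈ maximalIdeal R → q.eval v = 1) ∧
      ∀ v ∈ V, v - c ∉ maximalIdeal R → q.eval v = 0 := by
  classical
  obtain ⟨q, hT, hU⟩ := exists_eval_eq_one_eval_eq_zero
    (V.filter fun v => v - c ∈ maximalIdeal R) (V.filter fun v => v - c ∉ maximalIdeal R)
    fun t ht u hu => by
      rw [Finset.mem_filter] at ht hu
      refine notMem_maximalIdeal.mp fun htu => hu.2 ?_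
      simpa using (maximalIdeal R).sub_mem ht.2 htu
  exact ⟨q, fun v hv hvc => hT v (Finset.mem_filter.mpr ⟨hv, hvc⟩),
    fun v hv hvc => hU v (Finset.mem_filter.mpr ⟨hv, hvc⟩)⟩

end IsLocalRing

theorem stmt_11_general {R : Type*} [CommRing R] [IsLocalRing R] :
    (∃ f : Polynomial R, (Set.range fun r => f.eval r).Finite ∧
      ∃ a b : R, f.eval a - f.eval b ∉ IsLocalRing.maximalIdeal R) ↔
    (∃ (S : Set R) (g : Polynomial R), S.Nonempty ∧ S ≠ Set.univ ∧
      (∀ r ∈ S, g.eval r = 1) ∧ (∀ r ∉ S, g.eval r = 0)) := by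
  set m := IsLocalRing.maximalIdeal R
  constructor
  · rintro ⟨f, hfin, a, b, hab⟩
    obtain ⟨q, hq1, hq0⟩ :=
      IsLocalRing.exists_eval_eq_one_of_sub_mem_maximalIdeal hfin.toFinset (f.eval a)
    have hvalue (r : R) : f.eval r ∈ hfin.toFinset := hfin.mem_toFinset.mpr ⟨r, rfl⟩
    refine ⟨{r | f.eval r - f.eval a ∈ m}, q.comp f, ⟨a, by simp⟩, fun hS => hab ?_,
      fun r hr => by rw [eval_comp, hq1 _ (hvalue r) hr],
      fun r hr => by rw [eval_comp, hq0 _ (hvalue r) hr]⟩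
    have hb : b ∈ {r | f.eval r - f.eval a ∈ m} := hS ▸ Set.mem_univ b
    simpa using m.neg_mem hb
  · rintro ⟨S, g, ⟨s, hs⟩, hSne, h1, h0⟩
    obtain ⟨t, ht⟩ := (Set.ne_univ_iff_exists_notMem S).mp hSne
    refine ⟨g, (Set.toFinite ({0, 1} : Set R)).subset ?_, s, t, ?_⟩
    · rintro _ ⟨r, rfl⟩
      by_cases hr : r ∈ S
      · simp [h1 r hr]
      · simp [h0 r hr]
    · rw [h1 s hs, h0 t ht, sub_zero]
      exact IsLocalRing.notMem_maximalIdeal.mpr isUnit_one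

/-- **Proposition 2.6 (equivalence).** Let `(R, 𝔪)` be a zero dimensional commutative local
ring with finite residue field. Then the following are equivalent: (i) there is a polynomial
`f ∈ R[X]` with `f(R)` finite inducing a non-constant function on `R/𝔪`; (ii) `R` admits a
nontrivial polynomial characteristic function. -/
theorem stmt_11 {R : Type*} [CommRing R] [IsLocalRing R]
    (hdim : ∀ P : Ideal R, P.IsPrime → P.IsMaximal)
    (hres : Finite (IsLocalRing.ResidueField R)) :
    (∃ f : Polynomial R, (Set.range fun r => f.eval r).Finite ∧
      ∃ a b : R, f.eval a - f.eval b ∉ IsLocalRing.maximalIdeal R) ↔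
    (∃ (S : Set R) (g : Polynomial R), S.Nonempty ∧ S ≠ Set.univ ∧
      (∀ r ∈ S, g.eval r = 1) ∧ (∀ r ∉ S, g.eval r = 0)) :=
  stmt_11_general
end

section
/- Let (R, 𝔪) be a commutative local ring with unity which is zero dimensional (every prime ideal of R is maximal) and has finite residue field R/𝔪. If R admits a nontrivial polynomial characteristic function (there exist a nonempty proper subset S ⊆ R and f ∈ R[X] with f(r) = 1 for r ∈ S and f(r) = 0 for r ∉ S), then R has finite index of nilpotency: there exists a positive integer r such that aʳ = 0 for every nilpotent element a ∈ R. -/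
/-!
A polynomial function with idempotent values is invariant under nilpotent translations, since
`f (x + a) - f x` is a multiple of `a`. Expand `f` around a point `s ∈ S` as `g = f(s + X)`.
As `f` is not constant modulo `𝔪`, some coefficient `g_j` with `j > 0` is a unit; take `j`
minimal. In a zero dimensional local ring the lower coefficients `g_1, …, g_{j-1}` are nilpotent,
so they generate a nilpotent ideal `N`, say `N ^ E = 0`. For nilpotent `a` we have `g(a) = g(0)`,
and modulo `N` this reads `a ^ j * (g_j + a * (…)) = 0` with the second factor a unit. Hence
`a ^ j ∈ N` and `a ^ (j * E) = 0`.
-/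

open Polynomial

namespace Polynomial

variable {R : Type*} [CommRing R]

theorem eval_add_of_isNilpotent {f : R[X]} (hf : ∀ x, IsIdempotentElem (f.eval x)) (x : R)
    {a : R} (ha : IsNilpotent a) : f.eval (x + a) = f.eval x := by
  refine eq_of_isNilpotent_sub_of_isIdempotentElem (hf _) (hf _) ?_
  obtain ⟨c, hc⟩ := sub_dvd_eval_sub (x + a) x f
  rw [hc, add_sub_cancel_left]
  exact (Commute.all a c).isNilpotent_mul_right ha

theorem pow_eq_zero_of_eval_eq_coeff_zero {g : R[X]} {j : ℕ} (hj : 0 < j)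
    (hlow : ∀ i, 0 < i → i < j → g.coeff i = 0) (hunit : IsUnit (g.coeff j))
    {a : R} (ha : IsNilpotent a) (hga : g.eval a = g.coeff 0) : a ^ j = 0 := by
  obtain ⟨q, hq⟩ : X ^ j ∣ g - C (g.coeff 0) := by
    refine X_pow_dvd_iff.mpr fun d hd => ?_
    rcases d with _ | d
    · simp
    · simp [hlow _ d.succ_pos hd]
  have hq0 : q.eval 0 = g.coeff j := by
    have := coeff_X_pow_mul q j 0
    rw [zero_add, ← hq] at this
    simpa [coeff_zero_eq_eval_zero, coeff_C, hj.ne'] using this.symm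
  have hqa : IsUnit (q.eval a) := by
    obtain ⟨c, hc⟩ := sub_dvd_eval_sub a 0 q
    rw [← sub_add_cancel (q.eval a) (q.eval 0), hc, hq0, sub_zero]
    exact ((Commute.all a c).isNilpotent_mul_right ha).isUnit_add_right_of_commute hunit
      (Commute.all _ _)
  have hzero : a ^ j * q.eval a = 0 := by
    simpa [hga] using congr_arg (eval a) hq.symm
  exact hqa.mul_left_eq_zero.mp hzero

theorem exists_pow_eq_zero_of_eval_eq_coeff_zero {g : R[X]} {j : ℕ} (hj : 0 < j)
    (hlow : ∀ i, 0 < i → i < j → IsNilpotent (g.coeff i)) (hunit : IsUnit (g.coeff j)) :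
    ∃ r, 0 < r ∧ ∀ a : R, IsNilpotent a → g.eval a = g.coeff 0 → a ^ r = 0 := by
  set N : Ideal R := Ideal.span (g.coeff '' Set.Ico 1 j)
  have hN : N ≤ Ideal.radical ⊥ := by
    rw [Ideal.span_le]
    rintro _ ⟨i, hi, rfl⟩
    exact hlow i hi.1 hi.2
  obtain ⟨E, hE⟩ := Ideal.exists_pow_le_of_le_radical_of_fg hN
    (Submodule.fg_span ((Set.finite_Ico 1 j).image _))
  refine ⟨j * (E + 1), Nat.mul_pos hj E.succ_pos, fun a ha hga => ?_⟩
  have hmem : a ^ j ∈ N := by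
    rw [← Ideal.Quotient.eq_zero_iff_mem, map_pow]
    refine pow_eq_zero_of_eval_eq_coeff_zero (g := g.map (Ideal.Quotient.mk N)) hj
      (fun i hi hij => ?_) (by simpa using hunit.map _) (ha.map _) (by simp [eval_map_apply, hga])
    rw [coeff_map, Ideal.Quotient.eq_zero_iff_mem]
    exact Ideal.subset_span ⟨i, ⟨hi, hij⟩, rfl⟩
  have : a ^ (j * (E + 1)) ∈ (⊥ : Ideal R) := by
    rw [pow_mul]
    exact (Ideal.pow_le_pow_right E.le_succ).trans hE (Ideal.pow_mem_pow hmem _)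
  simpa using this

end Polynomial

theorem IsLocalRing.exists_isUnit_coeff_of_isUnit_eval_sub_coeff_zero {R : Type*} [CommRing R]
    [IsLocalRing R] {g : R[X]} {x : R} (h : IsUnit (g.eval x - g.coeff 0)) :
    ∃ j, 0 < j ∧ IsUnit (g.coeff j) ∧ ∀ i, 0 < i → i < j → ¬IsUnit (g.coeff i) := by
  classical
  have hex : ∃ j, 0 < j ∧ IsUnit (g.coeff j) := by
    by_contra! hc
    refine (mem_maximalIdeal _).mp ?_ h
    rw [eval_eq_sum_range, Finset.sum_range_succ', pow_zero, mul_one, add_sub_cancel_right]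
    exact Ideal.sum_mem _ fun i _ => Ideal.mul_mem_right _ _ (hc _ i.succ_pos)
  exact ⟨Nat.find hex, (Nat.find_spec hex).1, (Nat.find_spec hex).2,
    fun i hi hij hunit => Nat.find_min hex hij ⟨hi, hunit⟩⟩

theorem stmt_12_general {R : Type*} [CommRing R] [IsLocalRing R]
    (hdim : ∀ P : Ideal R, P.IsPrime → P.IsMaximal)
    (h : ∃ (S : Set R) (f : Polynomial R), S.Nonempty ∧ S ≠ Set.univ ∧
      (∀ r ∈ S, f.eval r = 1) ∧ (∀ r ∉ S, f.eval r = 0)) :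
    ∃ r : ℕ, 0 < r ∧ ∀ a : R, IsNilpotent a → a ^ r = 0 := by
  have := Ring.krullDimLE_zero_iff.mpr hdim
  obtain ⟨S, f, ⟨s, hs⟩, hSne, hS1, hS0⟩ := h
  obtain ⟨t, ht⟩ := (Set.ne_univ_iff_exists_notMem S).mp hSne
  have hidem : ∀ x, IsIdempotentElem (f.eval x) := fun x => by
    by_cases hx : x ∈ S
    · simp [hS1 x hx, IsIdempotentElem]
    · simp [hS0 x hx, IsIdempotentElem]
  have hjump : IsUnit ((taylor s f).eval (t - s) - (taylor s f).coeff 0) := by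
    simp [taylor_eval, taylor_coeff_zero, hS1 s hs, hS0 t ht]
  obtain ⟨j, hj, hunit, hlow⟩ := IsLocalRing.exists_isUnit_coeff_of_isUnit_eval_sub_coeff_zero hjump
  obtain ⟨r, hr, hpow⟩ := exists_pow_eq_zero_of_eval_eq_coeff_zero hj
    (fun i hi hij => Ring.KrullDimLE.isNilpotent_iff_mem_nonunits.mpr (hlow i hi hij)) hunit
  refine ⟨r, hr, fun a ha => hpow a ha ?_⟩
  rw [taylor_eval, taylor_coeff_zero, add_comm]
  exact eval_add_of_isNilpotent hidem s ha

/-- **Proposition 2.6 (finite index of nilpotency).** Let `(R, 𝔪)` be a zero dimensional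
commutative local ring with finite residue field. If `R` admits a nontrivial polynomial
characteristic function, then `R` has finite index of nilpotency. -/
theorem stmt_12 {R : Type*} [CommRing R] [IsLocalRing R]
    (hdim : ∀ P : Ideal R, P.IsPrime → P.IsMaximal)
    (hres : Finite (IsLocalRing.ResidueField R))
    (h : ∃ (S : Set R) (f : Polynomial R), S.Nonempty ∧ S ≠ Set.univ ∧
      (∀ r ∈ S, f.eval r = 1) ∧ (∀ r ∉ S, f.eval r = 0)) :
    ∃ r : ℕ, 0 < r ∧ ∀ a : R, IsNilpotent a → a ^ r = 0 :=
  stmt_12_general hdim h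
end

section
/- For a nonzero commutative ring with unity R, the following are equivalent: (i) R admits a nontrivial polynomial characteristic function, i.e., there exist a nonempty proper subset S ⊆ R and a polynomial f ∈ R[X] with f(r) = 1 for all r ∈ S and f(r) = 0 for all r ∉ S; (ii) R is local, zero dimensional (every prime ideal of R is maximal), has finite residue field, and has finite index of nilpotency (there exists a positive integer r with aʳ = 0 for every nilpotent a ∈ R). -/
open Polynomial

/-- Binomial expansion helper: `(1+x)^p = 1 + p*x + x^2*z` for some `z`. -/
lemma aux_one_add_pow {R : Type*} [CommRing R] (p : ℕ) (x : R) :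
    ∃ z : R, (1 + x) ^ p = 1 + (p : R) * x + x ^ 2 * z := by
  induction p with
  | zero => exact ⟨0, by push_cast; ring⟩
  | succ n ih =>
    obtain ⟨z, hz⟩ := ih
    refine ⟨z + n + x * z, ?_⟩
    rw [pow_succ, hz]
    push_cast
    ring

/-- In a local zero-dimensional ring, every element of the maximal ideal is nilpotent. -/
lemma aux_nilpotent_of_mem_max {R : Type*} [CommRing R] [IsLocalRing R]
    (hdim : ∀ P : Ideal R, P.IsPrime → P.IsMaximal) {a : R}
    (ha : a ∈ IsLocalRing.maximalIdeal R) : IsNilpotent a := by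
  rw [← mem_nilradical, nilradical_eq_sInf, Submodule.mem_sInf]
  intro P hP
  rwa [IsLocalRing.eq_maximalIdeal (hdim P hP)]

/-- **Proposition 2.7.** A nonzero commutative ring with unity `R` admits a nontrivial
polynomial characteristic function if and only if `R` is local, zero dimensional, with finite
residue field and finite index of nilpotency. -/
theorem stmt_14 {R : Type*} [CommRing R] [Nontrivial R] :
    (∃ (S : Set R) (f : Polynomial R), S.Nonempty ∧ S ≠ Set.univ ∧
      (∀ r ∈ S, f.eval r = 1) ∧ (∀ r ∉ S, f.eval r = 0)) ↔
    (IsLocalRing R ∧ (∀ P : Ideal R, P.IsPrime → P.IsMaximal) ∧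
      (∀ 𝔪 : Ideal R, 𝔪.IsMaximal → Finite (R ⧸ 𝔪)) ∧
      (∃ r : ℕ, 0 < r ∧ ∀ a : R, IsNilpotent a → a ^ r = 0)) := by
  classical
  constructor
  · rintro ⟨S, f, ⟨s, hs⟩, hSne, hf1, hf0⟩
    obtain ⟨t, ht⟩ : ∃ t, t ∉ S := by
      by_contra h
      push_neg at h
      exact hSne (Set.eq_univ_of_forall h)
    have hfs : f.eval s = 1 := hf1 s hs
    have hft : f.eval t = 0 := hf0 t ht
    have hval : ∀ r : R, f.eval r = 1 ∨ f.eval r = 0 := fun r => by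
      by_cases h : r ∈ S
      · exact Or.inl (hf1 r h)
      · exact Or.inr (hf0 r h)
    -- every prime is maximal with finite quotient
    have key : ∀ P : Ideal R, P.IsPrime → P.IsMaximal ∧ Finite (R ⧸ P) := by
      intro P hP
      set φ := Ideal.Quotient.mk P with hφ
      have h0 : f.map φ ≠ 0 := by
        intro h
        have := congrArg (Polynomial.eval (φ s)) h
        rw [Polynomial.eval_map, Polynomial.eval₂_at_apply, hfs] at this
        simp at this
      have h1 : f.map φ - 1 ≠ 0 := by
        intro h
        have h' : f.map φ = 1 := by rwa [sub_eq_zero] at h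
        have := congrArg (Polynomial.eval (φ t)) h'
        rw [Polynomial.eval_map, Polynomial.eval₂_at_apply, hft] at this
        simp at this
      have hF : (f.map φ) * (f.map φ - 1) ≠ 0 := mul_ne_zero h0 h1
      have hroots : {x : R ⧸ P | ((f.map φ) * (f.map φ - 1)).IsRoot x} = Set.univ := by
        ext x
        simp only [Set.mem_setOf_eq, Set.mem_univ, iff_true]
        obtain ⟨r, rfl⟩ := Ideal.Quotient.mk_surjective x
        have heq : ((f.map φ) * (f.map φ - 1)).eval (φ r)
            = φ (f.eval r) * (φ (f.eval r) - 1) := by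
          simp [Polynomial.eval_map, Polynomial.eval₂_at_apply]
        rw [Polynomial.IsRoot, heq]
        rcases hval r with h | h <;> simp [h]
      have hfin : Finite (R ⧸ P) := by
        rw [← Set.finite_univ_iff, ← hroots]
        exact Polynomial.finite_setOf_isRoot hF
      have hfield : IsField (R ⧸ P) := Finite.isField_of_domain _
      exact ⟨Ideal.Quotient.maximal_of_isField P hfield, hfin⟩
    -- local
    have hlocal : IsLocalRing R := by
      obtain ⟨M, hM⟩ := Ideal.exists_maximal R
      refine IsLocalRing.of_unique_max_ideal ⟨M, hM, ?_⟩
      intro I hI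
      by_contra hne
      have hcop : I ⊔ M = ⊤ := Ideal.IsMaximal.coprime_of_ne hI hM hne
      have h1mem : (1 : R) ∈ I ⊔ M := by rw [hcop]; exact Submodule.mem_top
      obtain ⟨m1, hm1, m2, hm2, h12⟩ := Submodule.mem_sup.mp h1mem
      set x := s + (t - s) * m1 with hx
      have hrs : x - s ∈ I := by
        have h' : x - s = (t - s) * m1 := by rw [hx]; ring
        rw [h']
        exact Ideal.mul_mem_left _ _ hm1
      have hrt : x - t ∈ M := by
        have h2 : m2 = 1 - m1 := by rw [← h12]; ring
        have h' : x - t = (s - t) * m2 := by rw [hx, h2]; ring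
        rw [h']
        exact Ideal.mul_mem_left _ _ hm2
      have d1 : f.eval x - f.eval s ∈ I := by
        obtain ⟨z, hz⟩ := Polynomial.sub_dvd_eval_sub x s f
        rw [hz]
        exact Ideal.mul_mem_right _ _ hrs
      have d2 : f.eval x - f.eval t ∈ M := by
        obtain ⟨z, hz⟩ := Polynomial.sub_dvd_eval_sub x t f
        rw [hz]
        exact Ideal.mul_mem_right _ _ hrt
      rcases hval x with h | h
      · rw [h, hft, sub_zero] at d2
        exact hM.ne_top (Ideal.eq_top_of_isUnit_mem _ d2 isUnit_one)
      · rw [h, hfs, zero_sub] at d1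
        exact hI.ne_top (Ideal.eq_top_of_isUnit_mem _ d1 isUnit_one.neg)
    haveI := hlocal
    have hprime_max : ∀ P : Ideal R, P.IsPrime → P.IsMaximal := fun P hP => (key P hP).1
    -- f is 1 on s + nilpotents
    have hS_nil : ∀ u : R, IsNilpotent u → f.eval (u + s) = 1 := by
      intro u hu
      rcases hval (u + s) with h | h
      · exact h
      · exfalso
        obtain ⟨z, hz⟩ := Polynomial.sub_dvd_eval_sub (u + s) s f
        rw [h, hfs, zero_sub] at hz
        have hus : u + s - s = u := by ring
        rw [hus] at hz
        obtain ⟨k, hk⟩ := hu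
        have hn1 : IsNilpotent (-1 : R) := ⟨k, by rw [hz, mul_pow, hk, zero_mul]⟩
        exact isUnit_one.neg.not_isNilpotent hn1
    -- the shifted polynomial
    set g : R[X] := f.comp (X + C s) - 1 with hgdef
    have hgeval : ∀ u : R, g.eval u = f.eval (u + s) - 1 := by
      intro u
      simp [hgdef, Polynomial.eval_comp]
    have hg0 : ∀ u : R, IsNilpotent u → g.eval u = 0 := fun u hu => by
      rw [hgeval, hS_nil u hu, sub_self]
    have hgc0 : g.coeff 0 = 0 := by
      rw [Polynomial.coeff_zero_eq_eval_zero, hgeval]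
      simp [hfs]
    have hexu : ∃ i, IsUnit (g.coeff i) := by
      by_contra h
      push_neg at h
      have hm : ∀ i, g.coeff i ∈ IsLocalRing.maximalIdeal R := fun i =>
        (IsLocalRing.mem_maximalIdeal _).mpr (h i)
      have hmem : g.eval (t - s) ∈ IsLocalRing.maximalIdeal R := by
        rw [Polynomial.eval_eq_sum_range]
        exact Ideal.sum_mem _ (fun i _ => Ideal.mul_mem_right _ _ (hm i))
      rw [hgeval, sub_add_cancel, hft, zero_sub] at hmem
      exact (IsLocalRing.maximalIdeal.isMaximal R).ne_top
        (Ideal.eq_top_of_isUnit_mem _ hmem isUnit_one.neg)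
    set c := Nat.find hexu with hcdef
    have hc : IsUnit (g.coeff c) := Nat.find_spec hexu
    have hclt : ∀ i < c, ¬ IsUnit (g.coeff i) := fun i hi => Nat.find_min hexu hi
    have hc1 : 1 ≤ c := by
      by_contra h
      push_neg at h
      interval_cases c
      rw [hgc0] at hc
      exact not_isUnit_zero hc
    set B : Ideal R := Ideal.span (↑((Finset.range c).image g.coeff) : Set R) with hBdef
    have hBnil : B ≤ (⊥ : Ideal R).radical := by
      rw [hBdef, Ideal.span_le]
      intro y hy
      simp only [Finset.coe_image, Finset.coe_range, Set.mem_image, Set.mem_Iio] at hy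
      obtain ⟨i, hi, rfl⟩ := hy
      have : IsNilpotent (g.coeff i) :=
        aux_nilpotent_of_mem_max hprime_max
          ((IsLocalRing.mem_maximalIdeal _).mpr (hclt i hi))
      exact this
    have hBfg : B.FG := ⟨(Finset.range c).image g.coeff, rfl⟩
    obtain ⟨M, hM⟩ := Ideal.exists_pow_le_of_le_radical_of_fg hBnil hBfg
    -- key computation: u^c ∈ B for every nilpotent u
    have hkey : ∀ u : R, IsNilpotent u → u ^ c ∈ B := by
      intro u hu
      set n := g.natDegree with hndef
      have hcn : c ≤ n := Polynomial.le_natDegree_of_ne_zero hc.ne_zero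
      have heval : ∑ i ∈ Finset.range (n + 1), g.coeff i * u ^ i = 0 := by
        rw [← Polynomial.eval_eq_sum_range]
        exact hg0 u hu
      have hsplit1 : ∑ i ∈ Finset.range (n + 1), g.coeff i * u ^ i
          = (∑ i ∈ Finset.range (c + 1), g.coeff i * u ^ i)
            + ∑ i ∈ Finset.Ico (c + 1) (n + 1), g.coeff i * u ^ i := by
        simp only [Finset.range_eq_Ico]
        exact (Finset.sum_Ico_consecutive _ (Nat.zero_le _) (by omega)).symm
      set T : R := ∑ i ∈ Finset.Ico (c + 1) (n + 1), g.coeff i * u ^ (i - (c + 1)) with hT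
      have hsplit2 : ∑ i ∈ Finset.Ico (c + 1) (n + 1), g.coeff i * u ^ i
          = u ^ (c + 1) * T := by
        rw [hT, Finset.mul_sum]
        refine Finset.sum_congr rfl ?_
        intro i hi
        have hle : c + 1 ≤ i := (Finset.mem_Ico.mp hi).1
        have h2 : (i - (c + 1)) + (c + 1) = i := by omega
        rw [mul_comm (u ^ (c + 1)), mul_assoc, ← pow_add, h2]
      set A : R := ∑ i ∈ Finset.range c, g.coeff i * u ^ i with hA
      have hAB : A ∈ B := by
        refine Ideal.sum_mem _ ?_
        intro i hi
        refine Ideal.mul_mem_right _ _ (Ideal.subset_span ?_)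
        simp only [Finset.coe_image, Finset.coe_range, Set.mem_image, Set.mem_Iio]
        exact ⟨i, Finset.mem_range.mp hi, rfl⟩
      have hrel : u ^ c * (g.coeff c + u * T) = -A := by
        have h1 : A + g.coeff c * u ^ c + u ^ (c + 1) * T = 0 := by
          rw [← hsplit2]
          have h0 := heval
          rw [hsplit1, Finset.sum_range_succ, ← hA] at h0
          exact h0
        have : u ^ c * (g.coeff c + u * T)
            = g.coeff c * u ^ c + u ^ (c + 1) * T := by ring
        rw [this]
        linear_combination h1
      have hvunit : IsUnit (g.coeff c + u * T) := by
        have hnil : IsNilpotent (u * T) := by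
          obtain ⟨k, hk⟩ := hu
          exact ⟨k, by rw [mul_pow, hk, zero_mul]⟩
        exact hnil.isUnit_add_left_of_commute hc (Commute.all _ _)
      obtain ⟨w, hw⟩ := hvunit.exists_right_inv
      have : u ^ c = (u ^ c * (g.coeff c + u * T)) * w := by
        rw [mul_assoc, hw, mul_one]
      rw [this, hrel]
      exact Ideal.mul_mem_right _ _ (B.neg_mem hAB)
    refine ⟨hlocal, hprime_max, fun m hm => (key m hm.isPrime).2,
      ⟨c * (M + 1), Nat.mul_pos hc1 (Nat.succ_pos M), ?_⟩⟩
    intro a ha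
    have h1 : a ^ c ∈ B := hkey a ha
    have h2 : (a ^ c) ^ (M + 1) ∈ B ^ (M + 1) := Ideal.pow_mem_pow h1 _
    have h3 : B ^ (M + 1) ≤ ⊥ := le_trans (Ideal.pow_le_pow_right (Nat.le_succ M)) hM
    have := h3 h2
    rwa [← pow_mul, Ideal.mem_bot] at this
  · rintro ⟨hloc, hdim, hres, r, hr, hnilb⟩
    haveI := hloc
    set 𝔪 := IsLocalRing.maximalIdeal R with h𝔪
    have hnil : ∀ a : R, a ∈ 𝔪 → IsNilpotent a := fun a ha =>
      aux_nilpotent_of_mem_max hdim ha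
    haveI : Finite (IsLocalRing.ResidueField R) :=
      hres 𝔪 (IsLocalRing.maximalIdeal.isMaximal R)
    haveI : Fintype (IsLocalRing.ResidueField R) := Fintype.ofFinite _
    set q := Fintype.card (IsLocalRing.ResidueField R) with hq
    set p := ringChar (IsLocalRing.ResidueField R) with hp
    haveI : CharP (IsLocalRing.ResidueField R) p := ringChar.charP _
    have hpprime : p.Prime := CharP.char_is_prime (IsLocalRing.ResidueField R) p
    have hq2 : 2 ≤ q := Fintype.one_lt_card
    have hpm : (p : R) ∈ 𝔪 := by
      rw [h𝔪, ← IsLocalRing.residue_eq_zero_iff, map_natCast]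
      exact CharP.cast_eq_zero _ p
    -- main exponent lemma
    have main : ∀ m : R, m ∈ 𝔪 → (1 + m) ^ p ^ (2 * r) = 1 := by
      intro m hm
      set I : Ideal R := Ideal.span {(p : R)} ⊔ Ideal.span {m} with hI
      have hIstep : ∀ k : ℕ, ∃ y ∈ I ^ (k + 1), (1 + m) ^ p ^ k = 1 + y := by
        intro k
        induction k with
        | zero =>
          refine ⟨m, ?_, by simp⟩
          rw [pow_one]
          exact Ideal.mem_sup_right (Ideal.subset_span rfl)
        | succ k ih =>
          obtain ⟨y, hy, hy'⟩ := ih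
          obtain ⟨z, hz⟩ := aux_one_add_pow p y
          refine ⟨(p : R) * y + y ^ 2 * z, ?_, ?_⟩
          · refine Ideal.add_mem _ ?_ ?_
            · have hpI : (p : R) ∈ I := Ideal.mem_sup_left (Ideal.subset_span rfl)
              have := Ideal.mul_mem_mul hpI hy
              rwa [← pow_succ'] at this
            · refine Ideal.mul_mem_right _ _ ?_
              have h2 : y ^ 2 ∈ I ^ ((k + 1) + (k + 1)) := by
                rw [pow_add, sq]
                exact Ideal.mul_mem_mul hy hy
              exact Ideal.pow_le_pow_right (by omega) h2
          · rw [pow_succ, pow_mul, hy', hz]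
            ring
      obtain ⟨y, hy, hy'⟩ := hIstep (2 * r)
      have hIbot : I ^ (2 * r + 1) ≤ ⊥ := by
        have h1 : (Ideal.span {(p : R)}) ^ r = ⊥ := by
          rw [Ideal.span_singleton_pow, hnilb _ (hnil _ hpm), Ideal.span_singleton_eq_bot]
        have h2 : (Ideal.span {m}) ^ r = ⊥ := by
          rw [Ideal.span_singleton_pow, hnilb _ (hnil _ hm), Ideal.span_singleton_eq_bot]
        calc I ^ (2 * r + 1) ≤ I ^ (r + r) := Ideal.pow_le_pow_right (by omega)
          _ ≤ (Ideal.span {(p : R)}) ^ r ⊔ (Ideal.span {m}) ^ r :=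
              Ideal.sup_pow_add_le_pow_sup_pow
          _ = ⊥ := by rw [h1, h2, sup_idem]
      have hy0 : y = 0 := by
        have := hIbot hy
        rwa [Ideal.mem_bot] at this
      rw [hy', hy0, add_zero]
    set N := (q - 1) * p ^ (2 * r) with hN
    have hrN : r ≤ N := by
      have h1 : 2 * r < 2 ^ (2 * r) := Nat.lt_two_pow_self
      have h2 : 2 ^ (2 * r) ≤ p ^ (2 * r) := Nat.pow_le_pow_left hpprime.two_le _
      have h3 : p ^ (2 * r) ≤ N := by
        rw [hN]
        exact Nat.le_mul_of_pos_left _ (by omega)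
      omega
    refine ⟨(𝔪 : Set R), 1 - X ^ N, ⟨0, 𝔪.zero_mem⟩, ?_, ?_, ?_⟩
    · intro h
      have h1 : (1 : R) ∈ 𝔪 := by
        have := Set.mem_univ (1 : R)
        rwa [← h] at this
      exact (IsLocalRing.maximalIdeal.isMaximal R).ne_top
        (Ideal.eq_top_of_isUnit_mem _ h1 isUnit_one)
    · intro a ha
      have hanil : IsNilpotent a := hnil a ha
      have haN : a ^ N = 0 := by
        have h0 : a ^ r = 0 := hnilb a hanil
        calc a ^ N = a ^ r * a ^ (N - r) := by rw [← pow_add]; congr 1; omega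
          _ = 0 := by rw [h0, zero_mul]
      simp [haN]
    · intro a ha
      have haunit : IsUnit a := by
        by_contra h
        exact ha ((IsLocalRing.mem_maximalIdeal a).mpr h)
      have hmk : (IsLocalRing.residue R a) ≠ 0 := by
        intro h
        exact ha ((IsLocalRing.residue_eq_zero_iff a).mp h)
      have hpow : (IsLocalRing.residue R a) ^ (q - 1) = 1 :=
        FiniteField.pow_card_sub_one_eq_one _ hmk
      have hmem : a ^ (q - 1) - 1 ∈ 𝔪 := by
        rw [h𝔪, ← IsLocalRing.residue_eq_zero_iff]
        rw [map_sub, map_pow, map_one, hpow, sub_self]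
      have h1 : (1 + (a ^ (q - 1) - 1)) ^ p ^ (2 * r) = 1 := main _ hmem
      have h2 : 1 + (a ^ (q - 1) - 1) = a ^ (q - 1) := by ring
      rw [h2] at h1
      have haN : a ^ N = 1 := by rw [hN, mul_comm, pow_mul']; exact h1
      simp [haN]
end

section
/- Let (R, 𝔪) be a commutative local ring with unity, S ⊆ R a nonempty proper subset, and f ∈ R[X] a polynomial with f(r) = 1 for all r ∈ S and f(r) = 0 for all r ∉ S. Then the indicator function of S factors through the residue field: for all a, b ∈ R, if a − b ∈ 𝔪 then a ∈ S if and only if b ∈ S. -/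
open Polynomial

section IndicatorPolynomial

variable {R : Type*} [CommRing R]

theorem Polynomial.eval_sub_eval_mem (f : R[X]) {I : Ideal R} {a b : R} (h : a - b ∈ I) :
    f.eval a - f.eval b ∈ I :=
  I.mem_of_dvd (sub_dvd_eval_sub a b f) h

theorem mem_of_mem_of_sub_mem_of_eval_indicator {I : Ideal R} (hI : I ≠ ⊤) {S : Set R}
    {f : R[X]} (hf1 : ∀ r ∈ S, f.eval r = 1) (hf0 : ∀ r ∉ S, f.eval r = 0) {a b : R}
    (hab : a - b ∈ I) (ha : a ∈ S) : b ∈ S := by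
  by_contra hb
  have h := f.eval_sub_eval_mem hab
  rw [hf1 a ha, hf0 b hb, sub_zero] at h
  exact hI ((Ideal.eq_top_iff_one I).mpr h)

theorem mem_iff_mem_of_sub_mem_of_eval_indicator {I : Ideal R} (hI : I ≠ ⊤) {S : Set R}
    {f : R[X]} (hf1 : ∀ r ∈ S, f.eval r = 1) (hf0 : ∀ r ∉ S, f.eval r = 0) {a b : R}
    (hab : a - b ∈ I) : a ∈ S ↔ b ∈ S :=
  ⟨mem_of_mem_of_sub_mem_of_eval_indicator hI hf1 hf0 hab,
    mem_of_mem_of_sub_mem_of_eval_indicator hI hf1 hf0 (sub_mem_comm_iff.mp hab)⟩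

end IndicatorPolynomial

theorem stmt_15_general {R : Type*} [CommRing R] [IsLocalRing R]
    (S : Set R) (f : Polynomial R)
    (hf1 : ∀ r ∈ S, f.eval r = 1) (hf0 : ∀ r ∉ S, f.eval r = 0) :
    ∀ a b : R, a - b ∈ IsLocalRing.maximalIdeal R → (a ∈ S ↔ b ∈ S) :=
  fun _ _ hab =>
    mem_iff_mem_of_sub_mem_of_eval_indicator (IsLocalRing.maximalIdeal.isMaximal R).ne_top
      hf1 hf0 hab

/-- **Remark 2.8.** Any nontrivial polynomial characteristic function of a commutative local
ring `(R, 𝔪)` factors through the residue field `R/𝔪`: if `a ≡ b (mod 𝔪)` then `a ∈ S ↔ b ∈ S`. -/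
theorem stmt_15 {R : Type*} [CommRing R] [IsLocalRing R]
    (S : Set R) (hS : S.Nonempty) (hS' : S ≠ Set.univ) (f : Polynomial R)
    (hf1 : ∀ r ∈ S, f.eval r = 1) (hf0 : ∀ r ∉ S, f.eval r = 0) :
    ∀ a b : R, a - b ∈ IsLocalRing.maximalIdeal R → (a ∈ S ↔ b ∈ S) :=
  stmt_15_general S f hf1 hf0
end
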